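/- arXiv:2410.10662 — 8 statements merged into one kernel-verified Lean document; each statement's English description precedes it below -/
import Mathlib

section
/- Let X be a d-RDR graph with d-RDR coloring function f, and let e₁ = {u₁,v₁} and e₂ = {u₂,v₂} be two edges of X with f(u₁) = f(u₂) ≠ ∅ (hence f(v₁) = f(v₂) = ∅). Let X′ be the graph on the same vertex set obtained by deleting e₁, e₂ and adding edges {u₁,v₂} and {u₂,v₁}. Then X′ is d-regular and f is a d-RDR coloring function on X′; in particular X′ is a d-RDR graph. -/
open SimpleGraph Finset

/-- A `k`-rainbow dominating function on a graph `G`: whenever `f v = ∅`,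
every color appears on some neighbor of `v`. -/
def IsKRDF {V : Type*} (G : SimpleGraph V) (k : ℕ) (f : V → Finset (Fin k)) : Prop :=
  ∀ v, f v = ∅ → ∀ c : Fin k, ∃ u, G.Adj v u ∧ c ∈ f u

/-- The weight of a rainbow dominating function. -/
def rdfWeight {V : Type*} [Fintype V] {k : ℕ} (f : V → Finset (Fin k)) : ℕ :=
  ∑ v, (f v).card

/-- The `k`-rainbow domination number of `G`. -/
noncomputable def rainbowDomNum {V : Type*} [Fintype V] (G : SimpleGraph V) (k : ℕ) : ℕ :=
  sInf {w | ∃ f, IsKRDF G k f ∧ rdfWeight f = w}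

lemma card_insert_erase_aux {V : Type*} [DecidableEq V] (s : Finset V) (x y : V)
    (hx : x ∈ s) (hy : y ∉ s) : (insert y (s.erase x)).card = s.card := by
  rw [card_insert_of_notMem (fun h => hy (mem_of_mem_erase h)), card_erase_of_mem hx]
  have := Finset.card_pos.mpr ⟨x, hx⟩
  omega

open scoped Classical in
/-- Any `d`-rainbow dominating function on a `d`-regular graph has weight at least
half the number of vertices. -/
lemma rdf_lower_aux {V : Type*} [Fintype V] (G : SimpleGraph V) (d : ℕ) (hd : 0 < d)
    (hreg : G.IsRegularOfDegree d) (g : V → Finset (Fin d)) (hg : IsKRDF G d g) :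
    Fintype.card V ≤ 2 * rdfWeight g := by
  classical
  set V₀ : Finset V := univ.filter (fun v => g v = ∅) with hV₀
  have h1 : ∀ v ∈ V₀, d ≤ ∑ u ∈ G.neighborFinset v, (g u).card := by
    intro v hv
    rw [hV₀, mem_filter] at hv
    have hsub : (univ : Finset (Fin d)) ⊆ (G.neighborFinset v).biUnion (fun u => g u) := by
      intro c _
      obtain ⟨u, hu, hcu⟩ := hg v hv.2 c
      exact mem_biUnion.mpr ⟨u, (mem_neighborFinset _ _ _).mpr hu, hcu⟩
    calc d = (univ : Finset (Fin d)).card := by simp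
    _ ≤ ((G.neighborFinset v).biUnion (fun u => g u)).card := card_le_card hsub
    _ ≤ ∑ u ∈ G.neighborFinset v, (g u).card := card_biUnion_le
  have h2 : d * V₀.card ≤ ∑ v ∈ V₀, ∑ u ∈ G.neighborFinset v, (g u).card := by
    calc d * V₀.card = V₀.card • d := by rw [smul_eq_mul, mul_comm]
    _ ≤ _ := Finset.card_nsmul_le_sum V₀ _ d h1
  have h3 : ∑ v ∈ V₀, ∑ u ∈ G.neighborFinset v, (g u).card
      ≤ ∑ v : V, ∑ u ∈ G.neighborFinset v, (g u).card :=
    sum_le_sum_of_subset (subset_univ _)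
  have h4 : ∑ v : V, ∑ u ∈ G.neighborFinset v, (g u).card = d * rdfWeight g := by
    have e1 : ∀ v : V, ∑ u ∈ G.neighborFinset v, (g u).card
        = ∑ u : V, if G.Adj v u then (g u).card else 0 := by
      intro v
      rw [neighborFinset_eq_filter, sum_filter]
    simp_rw [e1]
    rw [Finset.sum_comm]
    have e2 : ∀ u : V, (∑ v : V, if G.Adj v u then (g u).card else 0) = d * (g u).card := by
      intro u
      rw [← Finset.sum_filter]
      have : (univ.filter (fun v => G.Adj v u)) = G.neighborFinset u := by
        ext w; simp [mem_neighborFinset, adj_comm]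
      rw [this]
      rw [sum_const]
      rw [show #(G.neighborFinset u) = d from hreg u, smul_eq_mul]
    simp_rw [e2]
    rw [← Finset.mul_sum]
    rfl
  have hV0w : V₀.card ≤ rdfWeight g :=
    Nat.le_of_mul_le_mul_left (le_trans h2 (le_trans h3 (le_of_eq h4))) hd
  have hV1w : (univ.filter (fun v => ¬ g v = ∅)).card ≤ rdfWeight g := by
    calc (univ.filter (fun v => ¬ g v = ∅)).card
        = ∑ v ∈ univ.filter (fun v => ¬ g v = ∅), 1 := by rw [sum_const, smul_eq_mul, mul_one]
    _ ≤ ∑ v ∈ univ.filter (fun v => ¬ g v = ∅), (g v).card := by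
        apply sum_le_sum; intro v hv
        rw [mem_filter] at hv
        exact Nat.one_le_iff_ne_zero.mpr (fun h => hv.2 (card_eq_zero.mp h))
    _ ≤ ∑ v : V, (g v).card := sum_le_sum_of_subset (subset_univ _)
  have hsplit := Finset.card_filter_add_card_filter_not
    (s := (univ : Finset V)) (p := fun v => g v = ∅)
  rw [← hV₀, card_univ] at hsplit
  omega

open scoped Classical in
/-- RDR edge switching: if `X` is `d`-RDR with `d`-RDR coloring `f`, and
`e₁ = {u₁,v₁}`, `e₂ = {u₂,v₂}` are edges with `f u₁ = f u₂ ≠ ∅` and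
`f v₁ = f v₂ = ∅`, then the graph `X'` obtained by replacing `e₁, e₂` with
`{u₁,v₂}` and `{u₂,v₁}` is again `d`-regular and `f` is a `d`-RDR coloring on `X'`;
in particular `X'` is a `d`-RDR graph. -/
theorem rdr_edge_switching {V : Type*} [Fintype V] (X X' : SimpleGraph V) (d : ℕ)
    (hd : 0 < d)
    (hreg : X.IsRegularOfDegree d)
    (hrdr : 2 * rainbowDomNum X d = Fintype.card V)
    (f : V → Finset (Fin d))
    (hf : IsKRDF X d f) (hw : 2 * rdfWeight f = Fintype.card V)
    (u₁ v₁ u₂ v₂ : V)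
    (he₁ : X.Adj u₁ v₁) (he₂ : X.Adj u₂ v₂)
    (hne : s(u₁, v₁) ≠ s(u₂, v₂))
    (hc : f u₁ = f u₂) (hc0 : f u₁ ≠ ∅) (hv₁ : f v₁ = ∅) (hv₂ : f v₂ = ∅)
    (hnew₁ : ¬ X.Adj u₁ v₂) (hnew₂ : ¬ X.Adj u₂ v₁)
    (hX' : ∀ a b, X'.Adj a b ↔
      ((X.Adj a b ∧ s(a, b) ≠ s(u₁, v₁) ∧ s(a, b) ≠ s(u₂, v₂)) ∨
        s(a, b) = s(u₁, v₂) ∨ s(a, b) = s(u₂, v₁))) :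
    X'.IsRegularOfDegree d ∧ IsKRDF X' d f ∧ 2 * rdfWeight f = Fintype.card V ∧
      2 * rainbowDomNum X' d = Fintype.card V := by
  have hu1v1 : u₁ ≠ v₁ := he₁.ne
  have hu2v2 : u₂ ≠ v₂ := he₂.ne
  have hu1v2 : u₁ ≠ v₂ := fun h => hc0 (h ▸ hv₂)
  have hu2v1 : u₂ ≠ v₁ := fun h => hc0 (hc.trans (h ▸ hv₁))
  have hu12 : u₁ ≠ u₂ := fun h => hnew₁ (h ▸ he₂)
  have hv12 : v₁ ≠ v₂ := fun h => hnew₁ (h ▸ he₁)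
  -- Regularity
  have hreg' : X'.IsRegularOfDegree d := by
    intro a
    by_cases ha1 : a = u₁
    · have hiff : ∀ b, X'.Adj a b ↔ (b = v₂ ∨ (X.Adj a b ∧ b ≠ v₁)) := by
        subst ha1
        intro b
        simp only [hX', Sym2.eq_iff]
        constructor
        · aesop
        · aesop
      have hset : X'.neighborFinset a = insert v₂ ((X.neighborFinset a).erase v₁) := by
        ext b
        simp only [mem_neighborFinset, hiff, mem_insert, mem_erase]
        tauto
      show (X'.neighborFinset a).card = d
      rw [hset, card_insert_erase_aux _ _ _ ((mem_neighborFinset _ _ _).mpr (ha1 ▸ he₁))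
        (fun h => hnew₁ (ha1 ▸ (mem_neighborFinset _ _ _).mp h))]
      exact hreg a
    · by_cases ha2 : a = u₂
      · have hiff : ∀ b, X'.Adj a b ↔ (b = v₁ ∨ (X.Adj a b ∧ b ≠ v₂)) := by
          subst ha2
          intro b
          simp only [hX', Sym2.eq_iff]
          constructor
          · aesop
          · aesop
        have hset : X'.neighborFinset a = insert v₁ ((X.neighborFinset a).erase v₂) := by
          ext b
          simp only [mem_neighborFinset, hiff, mem_insert, mem_erase]
          tauto
        show (X'.neighborFinset a).card = d
        rw [hset, card_insert_erase_aux _ _ _ ((mem_neighborFinset _ _ _).mpr (ha2 ▸ he₂))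
          (fun h => hnew₂ (ha2 ▸ (mem_neighborFinset _ _ _).mp h))]
        exact hreg a
      · by_cases ha3 : a = v₁
        · have hiff : ∀ b, X'.Adj a b ↔ (b = u₂ ∨ (X.Adj a b ∧ b ≠ u₁)) := by
            subst ha3
            intro b
            simp only [hX', Sym2.eq_iff]
            constructor
            · aesop
            · aesop
          have hset : X'.neighborFinset a = insert u₂ ((X.neighborFinset a).erase u₁) := by
            ext b
            simp only [mem_neighborFinset, hiff, mem_insert, mem_erase]
            tauto
          show (X'.neighborFinset a).card = d
          rw [hset, card_insert_erase_aux _ _ _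
            ((mem_neighborFinset _ _ _).mpr (ha3 ▸ he₁.symm))
            (fun h => hnew₂ (((mem_neighborFinset _ _ _).mp (ha3 ▸ h)).symm))]
          exact hreg a
        · by_cases ha4 : a = v₂
          · have hiff : ∀ b, X'.Adj a b ↔ (b = u₁ ∨ (X.Adj a b ∧ b ≠ u₂)) := by
              subst ha4
              intro b
              simp only [hX', Sym2.eq_iff]
              constructor
              · aesop
              · aesop
            have hset : X'.neighborFinset a = insert u₁ ((X.neighborFinset a).erase u₂) := by
              ext b
              simp only [mem_neighborFinset, hiff, mem_insert, mem_erase]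
              tauto
            show (X'.neighborFinset a).card = d
            rw [hset, card_insert_erase_aux _ _ _
              ((mem_neighborFinset _ _ _).mpr (ha4 ▸ he₂.symm))
              (fun h => hnew₁ (((mem_neighborFinset _ _ _).mp (ha4 ▸ h)).symm))]
            exact hreg a
          · have hiff : ∀ b, X'.Adj a b ↔ X.Adj a b := by
              intro b
              simp only [hX', Sym2.eq_iff]
              constructor
              · aesop
              · aesop
            have hset : X'.neighborFinset a = X.neighborFinset a := by
              ext b
              simp only [mem_neighborFinset, hiff]
            show (X'.neighborFinset a).card = d
            rw [hset]
            exact hreg a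
  -- f is a rainbow dominating function on X'
  have hf' : IsKRDF X' d f := by
    intro v hv c
    by_cases hv1 : v = v₁
    · subst hv1
      obtain ⟨u, hu, hcu⟩ := hf v hv c
      by_cases huu : u = u₁
      · refine ⟨u₂, ?_, hc ▸ (huu ▸ hcu)⟩
        rw [hX']
        exact Or.inr (Or.inr (Sym2.eq_swap))
      · refine ⟨u, ?_, hcu⟩
        rw [hX', Sym2.eq_iff]
        exact Or.inl ⟨hu, by aesop, by aesop⟩
    · by_cases hv2 : v = v₂
      · subst hv2
        obtain ⟨u, hu, hcu⟩ := hf v hv c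
        by_cases huu : u = u₂
        · refine ⟨u₁, ?_, by rw [hc]; exact huu ▸ hcu⟩
          rw [hX']
          exact Or.inr (Or.inl (Sym2.eq_swap))
        · refine ⟨u, ?_, hcu⟩
          rw [hX', Sym2.eq_iff]
          exact Or.inl ⟨hu, by aesop, by aesop⟩
      · have hvu1 : v ≠ u₁ := fun h => hc0 (h ▸ hv)
        have hvu2 : v ≠ u₂ := fun h => hc0 (hc.trans (h ▸ hv))
        obtain ⟨u, hu, hcu⟩ := hf v hv c
        refine ⟨u, ?_, hcu⟩
        rw [hX', Sym2.eq_iff]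
        exact Or.inl ⟨hu, by aesop, by aesop⟩
  refine ⟨hreg', hf', hw, ?_⟩
  -- rainbow domination number of X'
  have hmem : rdfWeight f ∈ {w | ∃ g, IsKRDF X' d g ∧ rdfWeight g = w} := ⟨f, hf', rfl⟩
  have hle : rainbowDomNum X' d ≤ rdfWeight f := Nat.sInf_le hmem
  obtain ⟨g, hg, hgw⟩ := Nat.sInf_mem (⟨_, hmem⟩ :
    {w | ∃ g, IsKRDF X' d g ∧ rdfWeight g = w}.Nonempty)
  have hlow : Fintype.card V ≤ 2 * rdfWeight g := rdf_lower_aux X' d hd hreg' g hg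
  rw [hgw] at hlow
  have heq : rainbowDomNum X' d = sInf {w | ∃ g, IsKRDF X' d g ∧ rdfWeight g = w} := rfl
  rw [heq] at hle ⊢
  omega
end

section
/- Let X₁ and X₂ be disjoint d-RDR graphs with d-RDR coloring functions f₁, f₂, and let e₁ = {u₁,v₁} ∈ E(X₁), e₂ = {u₂,v₂} ∈ E(X₂) be edges with f₁(u₁) = f₂(u₂) ≠ ∅ (hence f₁(v₁) = f₂(v₂) = ∅). Then the graph X₁*X₂ on V(X₁) ∪ V(X₂) with edge set (E(X₁) ∪ E(X₂) ∪ {{u₁,v₂},{u₂,v₁}}) \ {e₁,e₂} is a d-RDR graph, with d-RDR coloring function f₁ ∪ f₂. -/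
open SimpleGraph Finset

open scoped Classical in
/-- Any `k`-rainbow dominating function on a `d`-regular graph (with `d > 0`)
has weight at least half the number of vertices. -/
lemma rdf_lower_bound {V : Type*} [Fintype V] {G : SimpleGraph V} {d : ℕ} (hd : 0 < d)
    (hreg : G.IsRegularOfDegree d) {f : V → Finset (Fin d)} (hf : IsKRDF G d f) :
    Fintype.card V ≤ 2 * rdfWeight f := by
  classical
  set V₀ : Finset V := univ.filter (fun v => f v = ∅) with hV₀def
  have hstepA : ∀ v ∈ V₀, d ≤ ∑ u ∈ G.neighborFinset v, (f u).card := by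
    intro v hv
    have hv' : f v = ∅ := (mem_filter.mp hv).2
    have hsub : (univ : Finset (Fin d)) ⊆ (G.neighborFinset v).biUnion (fun u => f u) := by
      intro c _
      obtain ⟨u, hadj, hcu⟩ := hf v hv' c
      exact mem_biUnion.mpr ⟨u, (G.mem_neighborFinset v u).mpr hadj, hcu⟩
    calc d = (univ : Finset (Fin d)).card := by simp
      _ ≤ ((G.neighborFinset v).biUnion (fun u => f u)).card := card_le_card hsub
      _ ≤ ∑ u ∈ G.neighborFinset v, (f u).card := card_biUnion_le
  have hdouble : ∑ v, ∑ u ∈ G.neighborFinset v, (f u).card = d * rdfWeight f := by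
    have h1 : ∀ v : V, ∑ u ∈ G.neighborFinset v, (f u).card
        = ∑ u, if G.Adj v u then (f u).card else 0 := by
      intro v
      rw [neighborFinset_eq_filter, sum_filter]
    simp_rw [h1]
    rw [Finset.sum_comm]
    have h2 : ∀ u : V, (∑ v, if G.Adj v u then (f u).card else 0) = d * (f u).card := by
      intro u
      rw [← Finset.sum_filter]
      rw [Finset.sum_const, smul_eq_mul]
      have : (univ.filter (fun v => G.Adj v u)) = G.neighborFinset u := by
        rw [neighborFinset_eq_filter]
        simp_rw [adj_comm]
      rw [this]
      have := hreg u
      rw [SimpleGraph.degree] at this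
      rw [this]
    simp_rw [h2]
    rw [rdfWeight, Finset.mul_sum]
  have hA : d * V₀.card ≤ d * rdfWeight f := by
    calc d * V₀.card = ∑ _v ∈ V₀, d := by rw [sum_const, smul_eq_mul, mul_comm]
      _ ≤ ∑ v ∈ V₀, ∑ u ∈ G.neighborFinset v, (f u).card := sum_le_sum hstepA
      _ ≤ ∑ v, ∑ u ∈ G.neighborFinset v, (f u).card :=
          sum_le_sum_of_subset (filter_subset _ _)
      _ = d * rdfWeight f := hdouble
  have h1 : V₀.card ≤ rdfWeight f := Nat.le_of_mul_le_mul_left hA hd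
  have h2 : V₀ᶜ.card ≤ rdfWeight f := by
    calc V₀ᶜ.card = ∑ _v ∈ V₀ᶜ, 1 := by simp
      _ ≤ ∑ v ∈ V₀ᶜ, (f v).card := by
          refine sum_le_sum fun v hv => ?_
          have : f v ≠ ∅ := by
            simp only [hV₀def, mem_compl, mem_filter, mem_univ, true_and] at hv
            exact hv
          exact Finset.card_pos.mpr (Finset.nonempty_iff_ne_empty.mpr this)
      _ ≤ ∑ v, (f v).card := sum_le_sum_of_subset (subset_univ _)
      _ = rdfWeight f := rfl
  have := Finset.card_add_card_compl V₀
  omega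

open scoped Classical in
/-- RDR graph stitching: given disjoint `d`-RDR graphs `X₁, X₂` with `d`-RDR
colorings `f₁, f₂` and edges `e₁ = {u₁,v₁} ∈ E(X₁)`, `e₂ = {u₂,v₂} ∈ E(X₂)` with
`f₁ u₁ = f₂ u₂ ≠ ∅` and `f₁ v₁ = f₂ v₂ = ∅`, the graph `Y = X₁ * X₂` on the disjoint
union obtained by replacing `e₁, e₂` with the cross edges `{u₁,v₂}` and `{u₂,v₁}`
is a `d`-RDR graph with `d`-RDR coloring `f₁ ∪ f₂`. -/
theorem rdr_graph_stitching {V₁ V₂ : Type*} [Fintype V₁] [Fintype V₂]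
    (X₁ : SimpleGraph V₁) (X₂ : SimpleGraph V₂) (Y : SimpleGraph (V₁ ⊕ V₂)) (d : ℕ)
    (hd : 0 < d)
    (hreg₁ : X₁.IsRegularOfDegree d) (hreg₂ : X₂.IsRegularOfDegree d)
    (hrdr₁ : 2 * rainbowDomNum X₁ d = Fintype.card V₁)
    (hrdr₂ : 2 * rainbowDomNum X₂ d = Fintype.card V₂)
    (f₁ : V₁ → Finset (Fin d)) (f₂ : V₂ → Finset (Fin d))
    (hf₁ : IsKRDF X₁ d f₁) (hw₁ : 2 * rdfWeight f₁ = Fintype.card V₁)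
    (hf₂ : IsKRDF X₂ d f₂) (hw₂ : 2 * rdfWeight f₂ = Fintype.card V₂)
    (u₁ v₁ : V₁) (u₂ v₂ : V₂)
    (he₁ : X₁.Adj u₁ v₁) (he₂ : X₂.Adj u₂ v₂)
    (hc : f₁ u₁ = f₂ u₂) (hc0 : f₁ u₁ ≠ ∅) (hv₁ : f₁ v₁ = ∅) (hv₂ : f₂ v₂ = ∅)
    (hY : ∀ a b, Y.Adj a b ↔
      ((∃ x y : V₁, a = Sum.inl x ∧ b = Sum.inl y ∧ X₁.Adj x y ∧ s(x, y) ≠ s(u₁, v₁)) ∨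
       (∃ x y : V₂, a = Sum.inr x ∧ b = Sum.inr y ∧ X₂.Adj x y ∧ s(x, y) ≠ s(u₂, v₂)) ∨
       s(a, b) = s(Sum.inl u₁, Sum.inr v₂) ∨
       s(a, b) = s(Sum.inr u₂, Sum.inl v₁))) :
    Y.IsRegularOfDegree d ∧ IsKRDF Y d (Sum.elim f₁ f₂) ∧
      2 * rdfWeight (Sum.elim f₁ f₂) = Fintype.card (V₁ ⊕ V₂) ∧
      2 * rainbowDomNum Y d = Fintype.card (V₁ ⊕ V₂) := by
  classical
  have hne₁ : u₁ ≠ v₁ := he₁.ne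
  have hne₂ : u₂ ≠ v₂ := he₂.ne
  -- neighbor finsets of the four special vertices and generic vertices
  have hNu₁ : Y.neighborFinset (Sum.inl u₁)
      = insert (Sum.inr v₂) (((X₁.neighborFinset u₁).erase v₁).image Sum.inl) := by
    ext b
    rw [mem_neighborFinset, hY]
    cases b with
    | inl y =>
      simp [Sym2.eq_iff, hne₁, eq_comm (a := y)]
      tauto
    | inr y =>
      simp [Sym2.eq_iff, hne₁]
  have hNv₁ : Y.neighborFinset (Sum.inl v₁)
      = insert (Sum.inr u₂) (((X₁.neighborFinset v₁).erase u₁).image Sum.inl) := by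
    ext b
    rw [mem_neighborFinset, hY]
    cases b with
    | inl y =>
      simp [Sym2.eq_iff, hne₁, hne₁.symm, eq_comm (a := y)]
      tauto
    | inr y =>
      simp [Sym2.eq_iff, hne₁, hne₁.symm, eq_comm (a := y)]
  have hNu₂ : Y.neighborFinset (Sum.inr u₂)
      = insert (Sum.inl v₁) (((X₂.neighborFinset u₂).erase v₂).image Sum.inr) := by
    ext b
    rw [mem_neighborFinset, hY]
    cases b with
    | inl y =>
      simp [Sym2.eq_iff, hne₂, hne₂.symm, eq_comm (a := y)]
    | inr y =>
      simp [Sym2.eq_iff, hne₂, hne₂.symm, eq_comm (a := y)]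
      tauto
  have hNv₂ : Y.neighborFinset (Sum.inr v₂)
      = insert (Sum.inl u₁) (((X₂.neighborFinset v₂).erase u₂).image Sum.inr) := by
    ext b
    rw [mem_neighborFinset, hY]
    cases b with
    | inl y =>
      simp [Sym2.eq_iff, hne₂, hne₂.symm, eq_comm (a := y)]
    | inr y =>
      simp [Sym2.eq_iff, hne₂, hne₂.symm, eq_comm (a := y)]
      tauto
  have hNgen₁ : ∀ x : V₁, x ≠ u₁ → x ≠ v₁ →
      Y.neighborFinset (Sum.inl x) = (X₁.neighborFinset x).image Sum.inl := by
    intro x hx1 hx2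
    ext b
    rw [mem_neighborFinset, hY]
    cases b with
    | inl y =>
      simp [Sym2.eq_iff, hx1, hx2, eq_comm (a := y)]
    | inr y =>
      simp [Sym2.eq_iff, hx1, hx2]
  have hNgen₂ : ∀ x : V₂, x ≠ u₂ → x ≠ v₂ →
      Y.neighborFinset (Sum.inr x) = (X₂.neighborFinset x).image Sum.inr := by
    intro x hx1 hx2
    ext b
    rw [mem_neighborFinset, hY]
    cases b with
    | inl y =>
      simp [Sym2.eq_iff, hx1, hx2]
    | inr y =>
      simp [Sym2.eq_iff, hx1, hx2, eq_comm (a := y)]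
  have hreg₁' : ∀ x : V₁, (X₁.neighborFinset x).card = d := by
    intro x; have := hreg₁ x; rw [SimpleGraph.degree] at this; exact this
  have hreg₂' : ∀ x : V₂, (X₂.neighborFinset x).card = d := by
    intro x; have := hreg₂ x; rw [SimpleGraph.degree] at this; exact this
  -- regularity
  have hregY : Y.IsRegularOfDegree d := by
    intro a
    rw [SimpleGraph.degree]
    cases a with
    | inl x =>
      by_cases hx1 : x = u₁
      · subst hx1
        rw [hNu₁, card_insert_of_notMem (by simp),
          card_image_of_injective _ Sum.inl_injective,
          card_erase_of_mem ((mem_neighborFinset _ _ _).mpr he₁), hreg₁']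
        omega
      · by_cases hx2 : x = v₁
        · subst hx2
          rw [hNv₁, card_insert_of_notMem (by simp),
            card_image_of_injective _ Sum.inl_injective,
            card_erase_of_mem ((mem_neighborFinset _ _ _).mpr he₁.symm), hreg₁']
          omega
        · rw [hNgen₁ x hx1 hx2, card_image_of_injective _ Sum.inl_injective, hreg₁']
    | inr x =>
      by_cases hx1 : x = u₂
      · subst hx1
        rw [hNu₂, card_insert_of_notMem (by simp),
          card_image_of_injective _ Sum.inr_injective,
          card_erase_of_mem ((mem_neighborFinset _ _ _).mpr he₂), hreg₂']
        omega
      · by_cases hx2 : x = v₂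
        · subst hx2
          rw [hNv₂, card_insert_of_notMem (by simp),
            card_image_of_injective _ Sum.inr_injective,
            card_erase_of_mem ((mem_neighborFinset _ _ _).mpr he₂.symm), hreg₂']
          omega
        · rw [hNgen₂ x hx1 hx2, card_image_of_injective _ Sum.inr_injective, hreg₂']
  -- the combined function is a KRDF on Y
  have hkrdf : IsKRDF Y d (Sum.elim f₁ f₂) := by
    intro a ha c
    cases a with
    | inl x =>
      simp only [Sum.elim_inl] at ha
      obtain ⟨u, hadj, hcu⟩ := hf₁ x ha c
      by_cases hs : s(x, u) = s(u₁, v₁)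
      · rcases Sym2.eq_iff.mp hs with ⟨hx, hu⟩ | ⟨hx, hu⟩
        · exact absurd (hx ▸ ha) hc0
        · refine ⟨Sum.inr u₂, ?_, ?_⟩
          · rw [hY]
            exact Or.inr (Or.inr (Or.inr (by rw [hx, Sym2.eq_swap])))
          · simpa [← hc, ← hu] using hcu
      · exact ⟨Sum.inl u, (hY _ _).mpr (Or.inl ⟨x, u, rfl, rfl, hadj, hs⟩), hcu⟩
    | inr x =>
      simp only [Sum.elim_inr] at ha
      obtain ⟨u, hadj, hcu⟩ := hf₂ x ha c
      by_cases hs : s(x, u) = s(u₂, v₂)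
      · rcases Sym2.eq_iff.mp hs with ⟨hx, hu⟩ | ⟨hx, hu⟩
        · exact absurd (hx ▸ ha) (hc ▸ hc0)
        · refine ⟨Sum.inl u₁, ?_, ?_⟩
          · rw [hY]
            exact Or.inr (Or.inr (Or.inl (by rw [hx, Sym2.eq_swap])))
          · simpa [hc, ← hu] using hcu
      · exact ⟨Sum.inr u, (hY _ _).mpr (Or.inr (Or.inl ⟨x, u, rfl, rfl, hadj, hs⟩)), hcu⟩
  -- weight
  have hwsum : rdfWeight (Sum.elim f₁ f₂) = rdfWeight f₁ + rdfWeight f₂ := by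
    simp [rdfWeight, Fintype.sum_sum_type]
  have hcard : Fintype.card (V₁ ⊕ V₂) = Fintype.card V₁ + Fintype.card V₂ :=
    Fintype.card_sum
  have hwY : 2 * rdfWeight (Sum.elim f₁ f₂) = Fintype.card (V₁ ⊕ V₂) := by
    omega
  refine ⟨hregY, hkrdf, hwY, ?_⟩
  -- rainbow domination number
  have hne : {w | ∃ f, IsKRDF Y d f ∧ rdfWeight f = w}.Nonempty :=
    ⟨rdfWeight (Sum.elim f₁ f₂), Sum.elim f₁ f₂, hkrdf, rfl⟩
  have hub : rainbowDomNum Y d ≤ rdfWeight (Sum.elim f₁ f₂) :=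
    Nat.sInf_le ⟨Sum.elim f₁ f₂, hkrdf, rfl⟩
  obtain ⟨g, hg, hgw⟩ := Nat.sInf_mem hne
  have hlb : Fintype.card (V₁ ⊕ V₂) ≤ 2 * rdfWeight g := rdf_lower_bound hd hregY hg
  rw [rainbowDomNum] at *
  omega
end

section
/- If X is a cubic (3-regular) 3-RDR graph on n vertices, then 6 divides n, X is bipartite with bipartition classes of size n/2, and for any minimum-weight 3-rainbow dominating function, each color i ∈ {1,2,3} is used on exactly n/6 vertices, the colored and uncolored vertices form the bipartition, and every colored vertex carries a single color. -/
open SimpleGraph Finset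

section Aux

variable {α : Type*}

lemma aux_all_eq {s : Finset α} {g : α → ℕ} {c : ℕ}
    (hle : ∀ a ∈ s, c ≤ g a) (hsum : ∑ a ∈ s, g a ≤ s.card * c) :
    ∀ a ∈ s, g a = c := by
  intro a ha
  by_contra hne
  have hlt : c < g a := lt_of_le_of_ne (hle a ha) (Ne.symm hne)
  have h2 : s.card * c < ∑ a ∈ s, g a := by
    calc s.card * c = ∑ _a ∈ s, c := by rw [Finset.sum_const, smul_eq_mul]
    _ < ∑ a ∈ s, g a := Finset.sum_lt_sum hle ⟨a, ha, hlt⟩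
  omega

lemma aux_all_eq' {s : Finset α} {g : α → ℕ} {c : ℕ}
    (hle : ∀ a ∈ s, g a ≤ c) (hsum : s.card * c ≤ ∑ a ∈ s, g a) :
    ∀ a ∈ s, g a = c := by
  intro a ha
  by_contra hne
  have hlt : g a < c := lt_of_le_of_ne (hle a ha) hne
  have h2 : ∑ a ∈ s, g a < s.card * c := by
    calc ∑ a ∈ s, g a < ∑ _a ∈ s, c := Finset.sum_lt_sum hle ⟨a, ha, hlt⟩
    _ = s.card * c := by rw [Finset.sum_const, smul_eq_mul]
  omega

lemma aux_all_eq2 {s : Finset α} {g h : α → ℕ}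
    (hle : ∀ a ∈ s, g a ≤ h a) (hsum : ∑ a ∈ s, h a ≤ ∑ a ∈ s, g a) :
    ∀ a ∈ s, g a = h a := by
  intro a ha
  by_contra hne
  have hlt : g a < h a := lt_of_le_of_ne (hle a ha) hne
  have h2 : ∑ a ∈ s, g a < ∑ a ∈ s, h a := Finset.sum_lt_sum hle ⟨a, ha, hlt⟩
  omega

end Aux

open scoped Classical in
/-- If `X` is a cubic `3`-RDR graph on `n` vertices, then `6 ∣ n`, `X` is bipartite
with classes of size `n/2`, and for any minimum-weight `3`-rainbow dominating function
each color is used on exactly `n/6` vertices, the colored and uncolored vertices form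
the bipartition, and every colored vertex carries a single color. -/
theorem cubic_3RDR_structure {V : Type*} [Fintype V] (X : SimpleGraph V)
    (hreg : X.IsRegularOfDegree 3)
    (hrdr : 2 * rainbowDomNum X 3 = Fintype.card V) :
    6 ∣ Fintype.card V ∧
    (∃ s : Finset V, 2 * s.card = Fintype.card V ∧
      ∀ u v, X.Adj u v → (u ∈ s ↔ v ∉ s)) ∧
    ∀ f : V → Finset (Fin 3), IsKRDF X 3 f → rdfWeight f = rainbowDomNum X 3 →
      ((∀ i : Fin 3, 6 * (Finset.univ.filter fun v => i ∈ f v).card = Fintype.card V) ∧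
       (∀ u v, X.Adj u v → (f u = ∅ ↔ f v ≠ ∅)) ∧
       ∀ v, f v ≠ ∅ → (f v).card = 1) := by
  classical
  set n := Fintype.card V with hn
  have hNcard : ∀ v : V, (X.neighborFinset v).card = 3 := by
    intro v
    rw [X.card_neighborFinset_eq_degree v]
    exact hreg v
  -- the key structural lemma for minimum RDFs
  have key : ∀ f : V → Finset (Fin 3), IsKRDF X 3 f → rdfWeight f = rainbowDomNum X 3 →
      ((∀ i : Fin 3, 6 * (Finset.univ.filter fun v => i ∈ f v).card = n) ∧
       (∀ u v, X.Adj u v → (f u = ∅ ↔ f v ≠ ∅)) ∧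
       (2 * (Finset.univ.filter fun v => f v ≠ ∅).card = n) ∧
       ∀ v, f v ≠ ∅ → (f v).card = 1) := by
    intro f hf hwmin
    set w := rdfWeight f with hw
    have h2w : 2 * w = n := by rw [hwmin]; exact hrdr
    set V0 : Finset V := Finset.univ.filter (fun v => f v = ∅) with hV0def
    set V1 : Finset V := Finset.univ.filter (fun v => f v ≠ ∅) with hV1def
    have hmemV0 : ∀ v, v ∈ V0 ↔ f v = ∅ := by intro v; simp [hV0def]
    have hmemV1 : ∀ v, v ∈ V1 ↔ f v ≠ ∅ := by intro v; simp [hV1def]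
    have hsplit : V0.card + V1.card = n := by
      rw [hV0def, hV1def, hn]
      exact Finset.card_filter_add_card_filter_not (p := fun v => f v = ∅)
    -- weight equals the sum over V1
    have hw1 : ∑ v ∈ V1, (f v).card = w := by
      rw [hV1def, hw, rdfWeight]
      exact Finset.sum_filter_of_ne (fun x _ h0 he => h0 (by rw [he]; rfl))
    have hge1 : ∀ v ∈ V1, 1 ≤ (f v).card := by
      intro v hv
      exact Finset.card_pos.2 (Finset.nonempty_iff_ne_empty.2 ((hmemV1 v).1 hv))
    have hV1le : V1.card ≤ w := by
      calc V1.card = ∑ _v ∈ V1, 1 := by simp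
      _ ≤ ∑ v ∈ V1, (f v).card := Finset.sum_le_sum hge1
      _ = w := hw1
    -- lower bound for inner neighbor sums
    have hS3 : ∀ v ∈ V0, 3 ≤ ∑ u ∈ X.neighborFinset v, (f u).card := by
      intro v hv
      have hcov : (Finset.univ : Finset (Fin 3)) ⊆ (X.neighborFinset v).biUnion f := by
        intro c _
        obtain ⟨u, hadj, hcu⟩ := hf v ((hmemV0 v).1 hv) c
        exact Finset.mem_biUnion.2 ⟨u, (X.mem_neighborFinset v u).2 hadj, hcu⟩
      calc (3 : ℕ) = (Finset.univ : Finset (Fin 3)).card := by simp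
      _ ≤ ((X.neighborFinset v).biUnion f).card := Finset.card_le_card hcov
      _ ≤ ∑ u ∈ X.neighborFinset v, (f u).card := Finset.card_biUnion_le
    -- double counting
    have hA : (∑ v ∈ V0, ∑ u ∈ X.neighborFinset v, (f u).card)
        = ∑ u, (V0.filter fun v => X.Adj v u).card * (f u).card := by
      have h1 : ∀ v : V, ∑ u ∈ X.neighborFinset v, (f u).card
          = ∑ u, if X.Adj v u then (f u).card else 0 := by
        intro v
        rw [neighborFinset_eq_filter, Finset.sum_filter]
      calc (∑ v ∈ V0, ∑ u ∈ X.neighborFinset v, (f u).card)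
          = ∑ v ∈ V0, ∑ u, if X.Adj v u then (f u).card else 0 :=
            Finset.sum_congr rfl (fun v _ => h1 v)
      _ = ∑ u, ∑ v ∈ V0, if X.Adj v u then (f u).card else 0 := Finset.sum_comm
      _ = ∑ u, (V0.filter fun v => X.Adj v u).card * (f u).card := by
        refine Finset.sum_congr rfl fun u _ => ?_
        rw [← Finset.sum_filter, Finset.sum_const, smul_eq_mul]
    have hm3 : ∀ u : V, (V0.filter fun v => X.Adj v u).card ≤ 3 := by
      intro u
      have hsub : (V0.filter fun v => X.Adj v u) ⊆ X.neighborFinset u := by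
        intro v hv
        rw [Finset.mem_filter] at hv
        exact (X.mem_neighborFinset u v).2 hv.2.symm
      calc (V0.filter fun v => X.Adj v u).card ≤ (X.neighborFinset u).card :=
        Finset.card_le_card hsub
      _ = 3 := hNcard u
    have hAle : (∑ v ∈ V0, ∑ u ∈ X.neighborFinset v, (f u).card) ≤ 3 * w := by
      rw [hA]
      calc ∑ u, (V0.filter fun v => X.Adj v u).card * (f u).card
          ≤ ∑ u, 3 * (f u).card :=
            Finset.sum_le_sum fun u _ => Nat.mul_le_mul_right _ (hm3 u)
      _ = 3 * ∑ u, (f u).card := by rw [Finset.mul_sum]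
      _ = 3 * w := rfl
    have hAge : V0.card * 3 ≤ ∑ v ∈ V0, ∑ u ∈ X.neighborFinset v, (f u).card := by
      calc V0.card * 3 = ∑ _v ∈ V0, 3 := by rw [Finset.sum_const, smul_eq_mul]
      _ ≤ ∑ v ∈ V0, ∑ u ∈ X.neighborFinset v, (f u).card := Finset.sum_le_sum hS3
    have hV0le : V0.card ≤ w := by
      have := le_trans hAge hAle
      omega
    have hV0 : V0.card = w := by omega
    have hV1 : V1.card = w := by omega
    -- every colored vertex carries a single color
    have hcard1 : ∀ v, f v ≠ ∅ → (f v).card = 1 := by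
      intro v hv
      exact aux_all_eq hge1 (by rw [hw1, hV1, Nat.mul_one]) v ((hmemV1 v).2 hv)
    have hcardle1 : ∀ v : V, (f v).card ≤ 1 := by
      intro v
      by_cases hv : f v = ∅
      · simp [hv]
      · exact le_of_eq (hcard1 v hv)
    -- per-vertex equality in the lower bound
    have hSeq : ∀ v ∈ V0, ∑ u ∈ X.neighborFinset v, (f u).card = 3 := by
      refine aux_all_eq hS3 ?_
      calc ∑ v ∈ V0, ∑ u ∈ X.neighborFinset v, (f u).card ≤ 3 * w := hAle
      _ = V0.card * 3 := by omega
    -- per-vertex equality in the upper bound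
    have hmu : ∀ u ∈ (Finset.univ : Finset V),
        (V0.filter fun v => X.Adj v u).card * (f u).card = 3 * (f u).card := by
      refine aux_all_eq2 (fun u _ => Nat.mul_le_mul_right _ (hm3 u)) ?_
      calc ∑ u, 3 * (f u).card = 3 * ∑ u, (f u).card := by rw [Finset.mul_sum]
      _ = 3 * w := rfl
      _ = V0.card * 3 := by omega
      _ ≤ ∑ v ∈ V0, ∑ u ∈ X.neighborFinset v, (f u).card := hAge
      _ = ∑ u, (V0.filter fun v => X.Adj v u).card * (f u).card := hA
    -- neighbors of a colored vertex are all uncolored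
    have hm3eq : ∀ u : V, f u ≠ ∅ →
        (V0.filter fun v => X.Adj v u) = X.neighborFinset u := by
      intro u hu
      have hg : 0 < (f u).card := Finset.card_pos.2 (Finset.nonempty_iff_ne_empty.2 hu)
      have hmeq : (V0.filter fun v => X.Adj v u).card = 3 :=
        Nat.eq_of_mul_eq_mul_right hg (hmu u (Finset.mem_univ u))
      refine Finset.eq_of_subset_of_card_le ?_ ?_
      · intro v hv
        rw [Finset.mem_filter] at hv
        exact (X.mem_neighborFinset u v).2 hv.2.symm
      · rw [hmeq, hNcard u]
    have hcolored_nbrs_empty : ∀ u v, X.Adj u v → f u ≠ ∅ → f v = ∅ := by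
      intro u v hadj hu
      have hvmem : v ∈ (V0.filter fun x => X.Adj x u) := by
        rw [hm3eq u hu]
        exact (X.mem_neighborFinset u v).2 hadj
      rw [Finset.mem_filter] at hvmem
      exact (hmemV0 v).1 hvmem.1
    have hempty_nbrs_colored : ∀ v u, X.Adj v u → f v = ∅ → f u ≠ ∅ := by
      intro v u hadj hv
      have hv0 : v ∈ V0 := (hmemV0 v).2 hv
      have heach := aux_all_eq' (s := X.neighborFinset v) (g := fun u => (f u).card) (c := 1)
        (fun u _ => hcardle1 u) (by rw [hNcard v, hSeq v hv0])
      have h1 := heach u ((X.mem_neighborFinset v u).2 hadj)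
      intro he
      simp only [he, Finset.card_empty] at h1
      exact absurd h1 (by decide)
    have hadjiff : ∀ u v, X.Adj u v → (f u = ∅ ↔ f v ≠ ∅) := by
      intro u v hadj
      constructor
      · exact hempty_nbrs_colored u v hadj
      · intro hv
        by_contra hu
        exact hv (hcolored_nbrs_empty u v hadj hu)
    -- each uncolored vertex has exactly one neighbor of each color
    have htv : ∀ v ∈ V0, ∀ i : Fin 3,
        ((X.neighborFinset v).filter fun u => i ∈ f u).card = 1 := by
      intro v hv i
      refine aux_all_eq (s := (Finset.univ : Finset (Fin 3)))
        (g := fun i => ((X.neighborFinset v).filter fun u => i ∈ f u).card) (c := 1)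
        ?_ ?_ i (Finset.mem_univ i)
      · intro j _
        obtain ⟨u, hadj, hcu⟩ := hf v ((hmemV0 v).1 hv) j
        exact Finset.card_pos.2
          ⟨u, Finset.mem_filter.2 ⟨(X.mem_neighborFinset v u).2 hadj, hcu⟩⟩
      · have hswap : ∑ j : Fin 3, ((X.neighborFinset v).filter fun u => j ∈ f u).card
            = ∑ u ∈ X.neighborFinset v, (f u).card := by
          calc ∑ j : Fin 3, ((X.neighborFinset v).filter fun u => j ∈ f u).card
              = ∑ j : Fin 3, ∑ u ∈ X.neighborFinset v, if j ∈ f u then 1 else 0 := by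
                refine Finset.sum_congr rfl fun j _ => ?_
                rw [Finset.card_filter]
          _ = ∑ u ∈ X.neighborFinset v, ∑ j : Fin 3, if j ∈ f u then 1 else 0 :=
                Finset.sum_comm
          _ = ∑ u ∈ X.neighborFinset v, (f u).card := by
                refine Finset.sum_congr rfl fun u _ => ?_
                rw [Finset.sum_ite_mem, Finset.univ_inter, Finset.sum_const, smul_eq_mul,
                  Nat.mul_one]
        rw [hswap, hSeq v hv]
        simp
    -- count each color class
    have hCi : ∀ i : Fin 3, V0.card = 3 * (Finset.univ.filter fun v => i ∈ f v).card := by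
      intro i
      have hleft : ∑ v ∈ V0, ((X.neighborFinset v).filter fun u => i ∈ f u).card
          = V0.card := by
        rw [Finset.sum_congr rfl (fun v hv => htv v hv i)]
        simp
      have hstep : ∑ v ∈ V0, ((X.neighborFinset v).filter fun u => i ∈ f u).card
          = ∑ u, if i ∈ f u then (V0.filter fun v => X.Adj v u).card else 0 := by
        calc ∑ v ∈ V0, ((X.neighborFinset v).filter fun u => i ∈ f u).card
            = ∑ v ∈ V0, ∑ u, if X.Adj v u ∧ i ∈ f u then 1 else 0 := by
              refine Finset.sum_congr rfl fun v _ => ?_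
              rw [Finset.card_filter, neighborFinset_eq_filter, Finset.sum_filter]
              refine Finset.sum_congr rfl fun u _ => ?_
              by_cases h1 : X.Adj v u <;> by_cases h2 : i ∈ f u <;> simp [h1, h2]
        _ = ∑ u, ∑ v ∈ V0, if X.Adj v u ∧ i ∈ f u then 1 else 0 := Finset.sum_comm
        _ = ∑ u, if i ∈ f u then (V0.filter fun v => X.Adj v u).card else 0 := by
              refine Finset.sum_congr rfl fun u _ => ?_
              by_cases h2 : i ∈ f u
              · simp only [h2, and_true, if_true]
                exact (Finset.card_filter _ _).symm
              · simp [h2]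
      have hright : ∑ u, (if i ∈ f u then (V0.filter fun v => X.Adj v u).card else 0)
          = 3 * (Finset.univ.filter fun v => i ∈ f v).card := by
        calc ∑ u, (if i ∈ f u then (V0.filter fun v => X.Adj v u).card else 0)
            = ∑ u ∈ Finset.univ.filter (fun u => i ∈ f u),
                (V0.filter fun v => X.Adj v u).card := (Finset.sum_filter _ _).symm
        _ = ∑ u ∈ Finset.univ.filter (fun u => i ∈ f u), 3 := by
              refine Finset.sum_congr rfl fun u hu => ?_
              rw [Finset.mem_filter] at hu
              have hne : f u ≠ ∅ := by
                intro he
                rw [he] at hu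
                exact absurd hu.2 (Finset.notMem_empty i)
              rw [hm3eq u hne, hNcard u]
        _ = 3 * (Finset.univ.filter fun v => i ∈ f v).card := by
              rw [Finset.sum_const, smul_eq_mul, Nat.mul_comm]
      rw [← hleft, hstep, hright]
    have hcolor : ∀ i : Fin 3, 6 * (Finset.univ.filter fun v => i ∈ f v).card = n := by
      intro i
      have := hCi i
      omega
    exact ⟨hcolor, hadjiff, by omega, hcard1⟩
  -- existence of a minimum RDF
  have hne : {w | ∃ f, IsKRDF X 3 f ∧ rdfWeight f = w}.Nonempty :=
    ⟨rdfWeight (fun _ : V => (Finset.univ : Finset (Fin 3))),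
      ⟨fun _ => Finset.univ, fun v hv => absurd hv Finset.univ_nonempty.ne_empty, rfl⟩⟩
  have hmem : rainbowDomNum X 3 ∈ {w | ∃ f, IsKRDF X 3 f ∧ rdfWeight f = w} :=
    Nat.sInf_mem hne
  obtain ⟨f0, hf0, hw0⟩ := hmem
  obtain ⟨hc0, hadj0, hs0, hcard0⟩ := key f0 hf0 hw0
  refine ⟨⟨(Finset.univ.filter fun v => (0 : Fin 3) ∈ f0 v).card, (hc0 0).symm⟩,
    ⟨Finset.univ.filter fun v => f0 v ≠ ∅, hs0, ?_⟩,
    fun f hf hw => ⟨(key f hf hw).1, (key f hf hw).2.1, (key f hf hw).2.2.2⟩⟩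
  intro u v hadj
  have h := hadj0 u v hadj
  simp only [Finset.mem_filter, Finset.mem_univ, true_and]
  constructor
  · intro hu hv
    exact hu (h.2 hv)
  · intro hv hu
    exact hv ((h.1 hu))
end

section
/- Let C be a 6-cycle in a 3-RDR graph X and let f be a 3-RDR coloring function on X. Then the consecutive vertices of C are colored in the pattern ∅, {i}, ∅, {j}, ∅, {k}, where {i,j,k} = {1,2,3}, up to choice of starting vertex and direction. -/
open SimpleGraph Finset

open scoped Classical in
theorem struct_lemma {V : Type*} [Fintype V] (X : SimpleGraph V)
    (hreg : X.IsRegularOfDegree 3)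
    (f : V → Finset (Fin 3))
    (hf : IsKRDF X 3 f) (hw : 2 * rdfWeight f = Fintype.card V) :
    (∀ u, (f u).card ≤ 1) ∧ (∀ u w, f u ≠ ∅ → X.Adj u w → f w = ∅) := by
  set E : Finset V := univ.filter (fun v => f v = ∅) with hE
  set P : Finset V := univ.filter (fun v => ¬ f v = ∅) with hP
  set W : ℕ := rdfWeight f with hWdef
  -- per empty vertex lower bound
  have hcov : ∀ v ∈ E, 3 ≤ ∑ u ∈ X.neighborFinset v, (f u).card := by
    intro v hv
    have hv' : f v = ∅ := (mem_filter.mp hv).2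
    have hsub : (univ : Finset (Fin 3)) ⊆ (X.neighborFinset v).biUnion f := by
      intro c _
      obtain ⟨u, hu, hc⟩ := hf v hv' c
      exact mem_biUnion.mpr ⟨u, (mem_neighborFinset _ _ _).mpr hu, hc⟩
    calc (3 : ℕ) = (univ : Finset (Fin 3)).card := by simp
      _ ≤ ((X.neighborFinset v).biUnion f).card := card_le_card hsub
      _ ≤ ∑ u ∈ X.neighborFinset v, (f u).card := card_biUnion_le
  -- double counting
  have hdc : ∑ v ∈ E, ∑ u ∈ X.neighborFinset v, (f u).card
      = ∑ u, (f u).card * (E.filter (fun v => X.Adj u v)).card := by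
    have h1 : ∀ v, ∑ u ∈ X.neighborFinset v, (f u).card
        = ∑ u, if X.Adj v u then (f u).card else 0 := by
      intro v
      rw [neighborFinset_eq_filter, sum_filter]
    simp_rw [h1]
    rw [Finset.sum_comm]
    congr 1
    ext u
    have : ∀ v ∈ E, (if X.Adj v u then (f u).card else 0)
        = (if X.Adj u v then (f u).card else 0) := by
      intro v _; simp [adj_comm]
    rw [sum_congr rfl this, ← sum_filter, sum_const, smul_eq_mul, mul_comm]
  have hfiltle : ∀ u, (E.filter (fun v => X.Adj u v)).card ≤ 3 := by
    intro u
    have hsub : E.filter (fun v => X.Adj u v) ⊆ X.neighborFinset u := by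
      intro v hv
      exact (mem_neighborFinset _ _ _).mpr (mem_filter.mp hv).2
    calc _ ≤ (X.neighborFinset u).card := card_le_card hsub
      _ = 3 := hreg u
  have hchain : 3 * E.card ≤ 3 * W := by
    calc 3 * E.card = ∑ _v ∈ E, 3 := by rw [sum_const, smul_eq_mul, mul_comm]
      _ ≤ ∑ v ∈ E, ∑ u ∈ X.neighborFinset v, (f u).card := sum_le_sum hcov
      _ = ∑ u, (f u).card * (E.filter (fun v => X.Adj u v)).card := hdc
      _ ≤ ∑ u, (f u).card * 3 := sum_le_sum fun u _ =>
          Nat.mul_le_mul_left _ (hfiltle u)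
      _ = 3 * W := by rw [hWdef, rdfWeight, ← sum_mul, mul_comm]
  have hEleW : E.card ≤ W := Nat.le_of_mul_le_mul_left hchain (by norm_num)
  have hWP : W = ∑ u ∈ P, (f u).card := by
    rw [hWdef, rdfWeight, ← Finset.sum_filter_add_sum_filter_not univ (fun v => f v = ∅)]
    have : ∑ u ∈ E, (f u).card = 0 := by
      apply sum_eq_zero; intro u hu; simp [(mem_filter.mp hu).2]
    rw [this, zero_add]
  have hPleW : P.card ≤ W := by
    rw [hWP]
    calc P.card = ∑ _u ∈ P, 1 := by simp
      _ ≤ ∑ u ∈ P, (f u).card := sum_le_sum fun u hu =>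
          Nat.one_le_iff_ne_zero.mpr (by simp [card_eq_zero, (mem_filter.mp hu).2])
  have hsplit : E.card + P.card = 2 * W := by
    rw [hE, hP, Finset.card_filter_add_card_filter_not, card_univ]
    exact hw.symm
  have hEW : E.card = W := by omega
  have hPW : P.card = W := by omega
  -- singleton property
  have hsingle : ∀ u ∈ P, (f u).card = 1 := by
    have hsum : ∑ u ∈ P, (1:ℕ) = ∑ u ∈ P, (f u).card := by
      rw [← hWP]; simp [hPW]
    have := (Finset.sum_eq_sum_iff_of_le (fun u hu =>
      Nat.one_le_iff_ne_zero.mpr (by simp [card_eq_zero, (mem_filter.mp hu).2]))).mp hsum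
    intro u hu; exact (this u hu).symm
  have hL1 : ∀ u, (f u).card ≤ 1 := by
    intro u
    by_cases h : f u = ∅
    · simp [h]
    · exact le_of_eq (hsingle u (mem_filter.mpr ⟨mem_univ u, h⟩))
  refine ⟨hL1, ?_⟩
  -- equality forces all neighbors of colored vertices empty
  have hS3W : ∑ u, (f u).card * (E.filter (fun v => X.Adj u v)).card = ∑ u, (f u).card * 3 := by
    have h1 : 3 * E.card ≤ ∑ u, (f u).card * (E.filter (fun v => X.Adj u v)).card := by
      calc 3 * E.card = ∑ _v ∈ E, 3 := by rw [sum_const, smul_eq_mul, mul_comm]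
        _ ≤ ∑ v ∈ E, ∑ u ∈ X.neighborFinset v, (f u).card := sum_le_sum hcov
        _ = _ := hdc
    have h2 : ∑ u, (f u).card * (E.filter (fun v => X.Adj u v)).card ≤ ∑ u, (f u).card * 3 :=
      sum_le_sum fun u _ => Nat.mul_le_mul_left _ (hfiltle u)
    have h3 : ∑ u, (f u).card * 3 = 3 * W := by rw [hWdef, rdfWeight, ← sum_mul, mul_comm]
    omega
  have heach := (Finset.sum_eq_sum_iff_of_le
    (fun u (_ : u ∈ univ) => Nat.mul_le_mul_left ((f u).card) (hfiltle u))).mp hS3W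
  intro u w hu hadj
  have hu' : u ∈ P := mem_filter.mpr ⟨mem_univ u, hu⟩
  have hcard1 : (f u).card = 1 := hsingle u hu'
  have h3 : (E.filter (fun v => X.Adj u v)).card = 3 := by
    have := heach u (mem_univ u)
    rw [hcard1, one_mul, one_mul] at this
    exact this
  have heq : E.filter (fun v => X.Adj u v) = X.neighborFinset u := by
    apply Finset.eq_of_subset_of_card_le
    · intro v hv; exact (mem_neighborFinset _ _ _).mpr (mem_filter.mp hv).2
    · rw [h3]; exact le_of_eq (hreg u)
  have hw' : w ∈ E.filter (fun v => X.Adj u v) := by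
    rw [heq]; exact (mem_neighborFinset _ _ _).mpr hadj
  exact (mem_filter.mp (mem_filter.mp hw').1).2


open scoped Classical in
/-- In a `3`-RDR graph with `3`-RDR coloring `f`, every `6`-cycle is colored in the
pattern `∅, {i}, ∅, {j}, ∅, {k}` with `{i,j,k} = {1,2,3}`, up to the choice of
starting vertex (reversal of direction yields the same form of pattern). -/
theorem sixCycle_coloring_pattern {V : Type*} [Fintype V] (X : SimpleGraph V)
    (hreg : X.IsRegularOfDegree 3)
    (hrdr : 2 * rainbowDomNum X 3 = Fintype.card V)
    (f : V → Finset (Fin 3))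
    (hf : IsKRDF X 3 f) (hw : 2 * rdfWeight f = Fintype.card V)
    (C : ZMod 6 → V) (hinj : Function.Injective C)
    (hadj : ∀ t : ZMod 6, X.Adj (C t) (C (t + 1))) :
    ∃ t : ZMod 6, ∃ i j k : Fin 3, i ≠ j ∧ i ≠ k ∧ j ≠ k ∧
      f (C t) = ∅ ∧ f (C (t + 1)) = {i} ∧ f (C (t + 2)) = ∅ ∧
      f (C (t + 3)) = {j} ∧ f (C (t + 4)) = ∅ ∧ f (C (t + 5)) = {k} := by

  obtain ⟨hL1, hL2⟩ := struct_lemma X hreg f hf hw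
  have hcov3 : ∀ v, f v = ∅ → 3 ≤ ∑ u ∈ X.neighborFinset v, (f u).card := by
    intro v hv
    have hsub : (univ : Finset (Fin 3)) ⊆ (X.neighborFinset v).biUnion f := by
      intro c _
      obtain ⟨u, hu, hc⟩ := hf v hv c
      exact mem_biUnion.mpr ⟨u, (mem_neighborFinset _ _ _).mpr hu, hc⟩
    calc (3 : ℕ) = (univ : Finset (Fin 3)).card := by simp
      _ ≤ ((X.neighborFinset v).biUnion f).card := card_le_card hsub
      _ ≤ ∑ u ∈ X.neighborFinset v, (f u).card := card_biUnion_le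
  have hL3 : ∀ v, f v = ∅ → ∀ w, X.Adj v w → f w ≠ ∅ := by
    intro v hv w hvw
    have hsum1 : ∑ _u ∈ X.neighborFinset v, (1:ℕ) = 3 := by
      rw [sum_const, smul_eq_mul, mul_one]; exact hreg v
    have heq : ∑ u ∈ X.neighborFinset v, (f u).card = ∑ _u ∈ X.neighborFinset v, (1:ℕ) := by
      refine le_antisymm (sum_le_sum fun u _ => hL1 u) ?_
      rw [hsum1]; exact hcov3 v hv
    have hall := (Finset.sum_eq_sum_iff_of_le (fun u _ => hL1 u)).mp heq
    intro hempty
    have hw1 := hall w ((mem_neighborFinset _ _ _).mpr hvw)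
    simp [hempty] at hw1
  have hLd : ∀ v a b, f v = ∅ → X.Adj v a → X.Adj v b → a ≠ b → f a ≠ f b := by
    intro v a b hv hva hvb hab hfeq
    have hsub : (univ : Finset (Fin 3)) ⊆ ((X.neighborFinset v).erase b).biUnion f := by
      intro c _
      obtain ⟨u, hu, hc⟩ := hf v hv c
      by_cases hub : u = b
      · refine mem_biUnion.mpr ⟨a, mem_erase.mpr ⟨hab, (mem_neighborFinset _ _ _).mpr hva⟩, ?_⟩
        rw [hfeq]; rw [hub] at hc; exact hc
      · exact mem_biUnion.mpr ⟨u, mem_erase.mpr ⟨hub, (mem_neighborFinset _ _ _).mpr hu⟩, hc⟩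
    have h1 : (3:ℕ) ≤ (((X.neighborFinset v).erase b).biUnion f).card := by
      calc (3:ℕ) = (univ : Finset (Fin 3)).card := by simp
        _ ≤ _ := card_le_card hsub
    have h2 : (((X.neighborFinset v).erase b).biUnion f).card ≤ 2 := by
      calc _ ≤ ∑ u ∈ (X.neighborFinset v).erase b, (f u).card := card_biUnion_le
        _ ≤ ∑ _u ∈ (X.neighborFinset v).erase b, 1 := sum_le_sum fun u _ => hL1 u
        _ = ((X.neighborFinset v).erase b).card := by simp
        _ = 2 := by
            rw [card_erase_of_mem ((mem_neighborFinset _ _ _).mpr hvb)]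
            have h3 : (X.neighborFinset v).card = 3 := hreg v
            omega
    omega
  have hsingle : ∀ u, f u ≠ ∅ → ∃ i, f u = {i} := fun u h =>
    card_eq_one.mp (le_antisymm (hL1 u)
      (Nat.one_le_iff_ne_zero.mpr fun h0 => h (card_eq_zero.mp h0)))
  obtain ⟨t0, e0⟩ : ∃ t0, f (C t0) = ∅ := by
    by_cases h0 : f (C 0) = ∅
    · exact ⟨0, h0⟩
    · exact ⟨0 + 1, hL2 _ _ h0 (hadj 0)⟩
  -- adjacency along the cycle with normalized indices
  have a01 : X.Adj (C t0) (C (t0+1)) := hadj t0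
  have a12 : X.Adj (C (t0+1)) (C (t0+2)) := by
    have := hadj (t0+1); rwa [show t0+1+1 = t0+2 by ring] at this
  have a23 : X.Adj (C (t0+2)) (C (t0+3)) := by
    have := hadj (t0+2); rwa [show t0+2+1 = t0+3 by ring] at this
  have a34 : X.Adj (C (t0+3)) (C (t0+4)) := by
    have := hadj (t0+3); rwa [show t0+3+1 = t0+4 by ring] at this
  have a45 : X.Adj (C (t0+4)) (C (t0+5)) := by
    have := hadj (t0+4); rwa [show t0+4+1 = t0+5 by ring] at this
  have a50 : X.Adj (C (t0+5)) (C t0) := by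
    have := hadj (t0+5)
    rwa [show t0+5+1 = t0 by rw [add_assoc, show (5+1:ZMod 6) = 0 by decide, add_zero]] at this
  have c1 : f (C (t0+1)) ≠ ∅ := hL3 _ e0 _ a01
  have e2 : f (C (t0+2)) = ∅ := hL2 _ _ c1 a12
  have c3 : f (C (t0+3)) ≠ ∅ := hL3 _ e2 _ a23
  have e4 : f (C (t0+4)) = ∅ := hL2 _ _ c3 a34
  have c5 : f (C (t0+5)) ≠ ∅ := hL3 _ e4 _ a45
  obtain ⟨i, hi⟩ := hsingle _ c1
  obtain ⟨j, hj⟩ := hsingle _ c3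
  obtain ⟨k, hk⟩ := hsingle _ c5
  have n13 : C (t0+1) ≠ C (t0+3) := fun hc => absurd (add_left_cancel (hinj hc)) (by decide)
  have n35 : C (t0+3) ≠ C (t0+5) := fun hc => absurd (add_left_cancel (hinj hc)) (by decide)
  have n15 : C (t0+1) ≠ C (t0+5) := fun hc => absurd (add_left_cancel (hinj hc)) (by decide)
  have hij : i ≠ j := fun h =>
    hLd (C (t0+2)) (C (t0+1)) (C (t0+3)) e2 a12.symm a23 n13 (by rw [hi, hj, h])
  have hjk : j ≠ k := fun h =>
    hLd (C (t0+4)) (C (t0+3)) (C (t0+5)) e4 a34.symm a45 n35 (by rw [hj, hk, h])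
  have hik : i ≠ k := fun h =>
    hLd (C t0) (C (t0+1)) (C (t0+5)) e0 a01 a50.symm n15 (by rw [hi, hk, h])
  exact ⟨t0, i, j, k, hij, hik, hjk, e0, hi, e2, hj, e4, hk⟩
end

section
/- Let X be a connected bipartite vertex-transitive d-regular graph on n vertices. If there exists a semiregular subgroup H ≤ Aut(X) of order n/(2d) such that the quotient graph of X by the orbits of H is simple and isomorphic to K_{d,d}, then X is a d-RDR graph. -/
/-!
In a `d`-regular graph a vertex with empty label collects all `d` colours from its `d`
neighbours, so double counting gives `d · #{empty} ≤ d · weight`, and with `#{nonempty} ≤ weight`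
every `d`-RDF has weight at least `n/2`. Conversely, labelling the vertices of one side of
`K_{d,d}` by distinct singletons is a `d`-RDF of weight `d`. Since `H` acts by automorphisms,
every edge of the quotient lifts to an edge at each vertex of the corresponding orbit, so pulling
this labelling back along `X → X/H ≅ K_{d,d}` gives a `d`-RDF of `X`; semiregularity makes all
orbits of size `|H|`, so its weight is `|H| · d = n/2`.
-/

open SimpleGraph Finset

/-- The quotient graph of `X` by the orbits of a subgroup `H` of permutations of the
vertices: orbits are adjacent iff some edge of `X` joins them. -/
def quotGraph {V : Type*} (X : SimpleGraph V) (H : Subgroup (Equiv.Perm V)) :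
    SimpleGraph (Quotient (MulAction.orbitRel H V)) where
  Adj o₁ o₂ := o₁ ≠ o₂ ∧ ∃ u v : V, X.Adj u v ∧
    Quotient.mk (MulAction.orbitRel H V) u = o₁ ∧ Quotient.mk (MulAction.orbitRel H V) v = o₂
  symm := by
    constructor
    rintro o₁ o₂ ⟨hne, u, v, ha, hu, hv⟩
    exact ⟨hne.symm, v, u, ha.symm, hv, hu⟩
  loopless := by constructor; rintro o ⟨hne, -⟩; exact hne rfl

section RainbowDomination

variable {V : Type*} {k : ℕ}

theorem rainbowDomNum_eq_rdfWeight [Fintype V] {G : SimpleGraph V} {f : V → Finset (Fin k)}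
    (hf : IsKRDF G k f) (hmin : ∀ g, IsKRDF G k g → rdfWeight f ≤ rdfWeight g) :
    rainbowDomNum G k = rdfWeight f :=
  le_antisymm (Nat.sInf_le ⟨f, hf, rfl⟩) <| by
    obtain ⟨g, hg, hw⟩ := Nat.sInf_mem (s := {w | ∃ g, IsKRDF G k g ∧ rdfWeight g = w})
      ⟨_, f, hf, rfl⟩
    rw [rainbowDomNum, ← hw]
    exact hmin g hg

theorem card_filter_ne_empty_le_rdfWeight [Fintype V] (f : V → Finset (Fin k)) :
    #{v | f v ≠ ∅} ≤ rdfWeight f :=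
  calc #{v | f v ≠ ∅} = ∑ v with f v ≠ ∅, 1 := card_eq_sum_ones _
    _ ≤ ∑ v with f v ≠ ∅, (f v).card :=
      sum_le_sum fun _ hv => card_pos.2 (nonempty_iff_ne_empty.2 (mem_filter.1 hv).2)
    _ ≤ rdfWeight f := sum_le_univ_sum_of_nonneg fun _ => Nat.zero_le _

theorem IsKRDF.le_sum_card_neighborFinset {G : SimpleGraph V} [Fintype V] [DecidableRel G.Adj]
    {f : V → Finset (Fin k)} (hf : IsKRDF G k f) {v : V} (hv : f v = ∅) :
    k ≤ ∑ u ∈ G.neighborFinset v, (f u).card :=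
  calc k = #(univ : Finset (Fin k)) := (card_fin k).symm
    _ ≤ #((G.neighborFinset v).biUnion f) := card_le_card fun c _ => by
      obtain ⟨u, hadj, hc⟩ := hf v hv c
      exact mem_biUnion.2 ⟨u, (G.mem_neighborFinset v u).2 hadj, hc⟩
    _ ≤ ∑ u ∈ G.neighborFinset v, (f u).card := card_biUnion_le

theorem SimpleGraph.IsRegularOfDegree.sum_sum_neighborFinset [Fintype V]
    {G : SimpleGraph V} [DecidableRel G.Adj] {d : ℕ} (hreg : G.IsRegularOfDegree d)
    (g : V → ℕ) : ∑ v, ∑ u ∈ G.neighborFinset v, g u = d * ∑ u, g u := by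
  simp only [neighborFinset_eq_filter, sum_filter]
  rw [sum_comm, mul_sum]
  refine sum_congr rfl fun u _ => ?_
  simp_rw [G.adj_comm _ u]
  rw [← sum_filter, sum_const, ← neighborFinset_eq_filter, card_neighborFinset_eq_degree,
    hreg u, smul_eq_mul]

theorem IsKRDF.mul_card_filter_eq_empty_le [Fintype V] {G : SimpleGraph V} [DecidableRel G.Adj]
    {d : ℕ} (hreg : G.IsRegularOfDegree d) {f : V → Finset (Fin k)} (hf : IsKRDF G k f) :
    k * #{v | f v = ∅} ≤ d * rdfWeight f :=
  calc k * #{v | f v = ∅} = #{v | f v = ∅} • k := by rw [smul_eq_mul, mul_comm]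
    _ ≤ ∑ v with f v = ∅, ∑ u ∈ G.neighborFinset v, (f u).card :=
      card_nsmul_le_sum _ _ _ fun v hv => hf.le_sum_card_neighborFinset (mem_filter.1 hv).2
    _ ≤ ∑ v, ∑ u ∈ G.neighborFinset v, (f u).card :=
      sum_le_univ_sum_of_nonneg fun _ => Nat.zero_le _
    _ = d * rdfWeight f := hreg.sum_sum_neighborFinset _

theorem IsKRDF.card_le_two_mul_rdfWeight [Fintype V] {G : SimpleGraph V} [DecidableRel G.Adj]
    {d : ℕ} (hd : 0 < d) (hreg : G.IsRegularOfDegree d) {f : V → Finset (Fin d)}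
    (hf : IsKRDF G d f) : Fintype.card V ≤ 2 * rdfWeight f := by
  have hempty : #{v | f v = ∅} ≤ rdfWeight f :=
    Nat.le_of_mul_le_mul_left (hf.mul_card_filter_eq_empty_le hreg) hd
  have hsplit := card_filter_add_card_filter_not (s := univ) (fun v => f v = ∅)
  have hnonempty := card_filter_ne_empty_le_rdfWeight f
  rw [card_univ] at hsplit
  simp only [ne_eq] at hnonempty
  omega

end RainbowDomination

section Pullback

variable {V W : Type*} {k : ℕ}

theorem IsKRDF.comp {G : SimpleGraph V} {G' : SimpleGraph W} {F : W → Finset (Fin k)}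
    (hF : IsKRDF G' k F) (π : V → W) (hπ : ∀ v w, G'.Adj (π v) w → ∃ u, G.Adj v u ∧ π u = w) :
    IsKRDF G k (F ∘ π) := by
  intro v hv c
  obtain ⟨w, hadj, hc⟩ := hF (π v) hv c
  obtain ⟨u, hvu, rfl⟩ := hπ v w hadj
  exact ⟨u, hvu, hc⟩

theorem rdfWeight_comp [Fintype V] [Fintype W] [DecidableEq W] (π : V → W)
    (F : W → Finset (Fin k)) {m : ℕ} (hfiber : ∀ w, #{v | π v = w} = m) :
    rdfWeight (F ∘ π) = m * rdfWeight F := by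
  rw [rdfWeight, ← sum_fiberwise univ π, rdfWeight, mul_sum]
  refine sum_congr rfl fun w _ => ?_
  rw [sum_congr rfl fun v hv => by rw [Function.comp_apply, (mem_filter.1 hv).2], sum_const,
    hfiber, smul_eq_mul]

end Pullback

section Orbits

variable {V : Type*} {H : Subgroup (Equiv.Perm V)}

theorem stabilizer_eq_bot_of_semiregular (hsemireg : ∀ h ∈ H, h ≠ 1 → ∀ v : V, h v ≠ v)
    (v : V) : MulAction.stabilizer H v = ⊥ :=
  (Subgroup.eq_bot_iff_forall _).2 fun h hh => by
    by_contra hne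
    exact hsemireg h h.2 (by simpa using hne) v hh

theorem card_filter_mk_orbitRel_eq [Fintype V] [DecidableEq (Quotient (MulAction.orbitRel H V))]
    (hsemireg : ∀ h ∈ H, h ≠ 1 → ∀ v : V, h v ≠ v) (o : Quotient (MulAction.orbitRel H V)) :
    #{v | Quotient.mk _ v = o} = Nat.card H := by
  induction o using Quotient.inductionOn with
  | h v₀ =>
    have horbit : (({v | Quotient.mk (MulAction.orbitRel H V) v = Quotient.mk _ v₀} : Finset V) :
        Set V) = MulAction.orbit H v₀ := by
      ext v
      simpa [MulAction.orbitRel_apply] using Quotient.eq (r := MulAction.orbitRel H V)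
    rw [← Set.ncard_coe_finset, horbit, ← MulAction.index_stabilizer,
      stabilizer_eq_bot_of_semiregular hsemireg, Subgroup.index_bot]

theorem exists_adj_of_quotGraph_adj {X : SimpleGraph V}
    (hHaut : ∀ h ∈ H, ∀ a b, X.Adj a b ↔ X.Adj (h a) (h b)) {v : V}
    {o : Quotient (MulAction.orbitRel H V)} (hadj : (quotGraph X H).Adj (Quotient.mk _ v) o) :
    ∃ u, X.Adj v u ∧ Quotient.mk _ u = o := by
  obtain ⟨-, a, b, hab, ha, rfl⟩ := hadj
  obtain ⟨h, rfl⟩ : a ∈ MulAction.orbit H v := Quotient.exact ha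
  refine ⟨h⁻¹ • b, ?_, Quotient.sound (MulAction.mem_orbit b h⁻¹)⟩
  simpa [Subgroup.smul_def, Equiv.Perm.smul_def] using (hHaut _ (h⁻¹).2 _ b).1 hab

end Orbits

section CompleteBipartite

variable {k : ℕ} {β : Type*}

def leftSingletons : Fin k ⊕ β → Finset (Fin k) :=
  Sum.elim (fun i => {i}) fun _ => ∅

theorem isKRDF_leftSingletons : IsKRDF (completeBipartiteGraph (Fin k) β) k leftSingletons
  | .inl i, hv, _ => absurd hv (singleton_ne_empty i)
  | .inr _, _, c => ⟨.inl c, by simp, mem_singleton_self c⟩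

theorem rdfWeight_leftSingletons [Fintype β] :
    rdfWeight (leftSingletons : Fin k ⊕ β → Finset (Fin k)) = k := by
  simp [rdfWeight, leftSingletons]

end CompleteBipartite

open scoped Classical in
theorem rdr_of_quotient_Kdd_general {V : Type*} [Fintype V] (X : SimpleGraph V) (d : ℕ)
    (hd : 0 < d)
    (hreg : X.IsRegularOfDegree d)
    (H : Subgroup (Equiv.Perm V))
    (hHaut : ∀ h ∈ H, ∀ a b, X.Adj a b ↔ X.Adj (h a) (h b))
    (hsemireg : ∀ h ∈ H, h ≠ 1 → ∀ v : V, h v ≠ v)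
    (hcard : Nat.card H * (2 * d) = Fintype.card V)
    (hiso : Nonempty (quotGraph X H ≃g completeBipartiteGraph (Fin d) (Fin d))) :
    2 * rainbowDomNum X d = Fintype.card V := by
  obtain ⟨e⟩ := hiso
  set π : V → Fin d ⊕ Fin d := fun v => e (Quotient.mk _ v)
  have hf : IsKRDF X d (leftSingletons ∘ π) := isKRDF_leftSingletons.comp π fun v s hadj => by
    obtain ⟨u, hvu, hu⟩ := exists_adj_of_quotGraph_adj hHaut (v := v)
      (by simpa [π] using e.symm.map_rel_iff.2 hadj)
    exact ⟨u, hvu, by simp [π, hu]⟩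
  have hweight : 2 * rdfWeight (leftSingletons ∘ π) = Fintype.card V := by
    rw [rdfWeight_comp π _ (m := Nat.card H) fun s => ?_, rdfWeight_leftSingletons, ← hcard]
    · ring
    · rw [← card_filter_mk_orbitRel_eq hsemireg (e.symm s)]
      simp only [π, ← e.eq_symm_apply]
  rw [rainbowDomNum_eq_rdfWeight hf fun g hg => ?_, hweight]
  have := hg.card_le_two_mul_rdfWeight hd hreg
  omega

open scoped Classical in
/-- Criterion: a connected bipartite vertex-transitive `d`-regular graph `X` on `n`
vertices with a semiregular group `H` of automorphisms of order `n/(2d)` whose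
quotient graph is simple (no orbit carries an edge) and isomorphic to `K_{d,d}`
is a `d`-RDR graph. -/
theorem rdr_of_quotient_Kdd {V : Type*} [Fintype V] (X : SimpleGraph V) (d : ℕ)
    (hd : 0 < d)
    (hconn : X.Connected)
    (hbip : ∃ s : Finset V, ∀ u v, X.Adj u v → (u ∈ s ↔ v ∉ s))
    (hvt : ∀ u v : V, ∃ g : Equiv.Perm V,
      (∀ a b, X.Adj a b ↔ X.Adj (g a) (g b)) ∧ g u = v)
    (hreg : X.IsRegularOfDegree d)
    (H : Subgroup (Equiv.Perm V))
    (hHaut : ∀ h ∈ H, ∀ a b, X.Adj a b ↔ X.Adj (h a) (h b))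
    (hsemireg : ∀ h ∈ H, h ≠ 1 → ∀ v : V, h v ≠ v)
    (hcard : Nat.card H * (2 * d) = Fintype.card V)
    (hsimple : ∀ h ∈ H, ∀ v : V, ¬ X.Adj v (h v))
    (hiso : Nonempty (quotGraph X H ≃g completeBipartiteGraph (Fin d) (Fin d))) :
    2 * rainbowDomNum X d = Fintype.card V :=
  rdr_of_quotient_Kdd_general X d hd hreg H hHaut hsemireg hcard hiso
end

section
/- Let X be a connected bipartite vertex-transitive d-regular graph on n vertices with bipartition V = V₁ ∪ V₂, and let G ≤ Aut(X) act vertex-transitively. Suppose B ⊆ V₁ is a block of imprimitivity for G with |B| = n/(2d), and there exists v ∈ B such that N(v) meets exactly d distinct translates B^g, g ∈ G. Then X is d-RDR. -/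
open SimpleGraph Finset

-- side preservation
lemma side_lemma {V : Type*} (X : SimpleGraph V) (V₁ : Finset V)
    (hbip : ∀ u v, X.Adj u v → (u ∈ V₁ ↔ v ∉ V₁))
    (hconn : X.Connected) (g : Equiv.Perm V)
    (hg : ∀ a b, X.Adj a b ↔ X.Adj (g a) (g b)) :
    ∀ x y : V, ((x ∈ V₁) ↔ (y ∈ V₁)) ↔ ((g x ∈ V₁) ↔ (g y ∈ V₁)) := by
  intro x y
  obtain ⟨w⟩ := hconn.preconnected x y
  induction w with
  | nil => tauto
  | cons h p ih =>
    have h1 := hbip _ _ h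
    have h2 := hbip _ _ ((hg _ _).mp h)
    tauto

-- degree as filter card
lemma deg_filter {V : Type*} [Fintype V] [DecidableEq V] (X : SimpleGraph V)
    [DecidableRel X.Adj] {d : ℕ} (hreg : X.IsRegularOfDegree d) (u : V) :
    (univ.filter (fun w => X.Adj u w)).card = d := by
  have := hreg u
  rwa [SimpleGraph.degree, SimpleGraph.neighborFinset_eq_filter] at this

-- equal sides
lemma bip_half {V : Type*} [Fintype V] [DecidableEq V] (X : SimpleGraph V)
    [DecidableRel X.Adj] {d : ℕ} (hd : 0 < d)
    (hreg : X.IsRegularOfDegree d) (V₁ : Finset V)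
    (hbip : ∀ u v, X.Adj u v → (u ∈ V₁ ↔ v ∉ V₁)) :
    V₁.card = V₁ᶜ.card := by
  classical
  have e1 : ∀ u w : V, (if u ∈ V₁ then if X.Adj u w then 1 else 0 else 0)
      = (if w ∈ V₁ᶜ then if X.Adj u w then 1 else 0 else 0) := by
    intro u w
    by_cases h : X.Adj u w
    · have hb := hbip u w h
      by_cases hu : u ∈ V₁
      · have hw : w ∉ V₁ := hb.mp hu
        simp [h, hu, hw, Finset.mem_compl]
      · have hw : w ∈ V₁ := by tauto
        simp [h, hu, hw, Finset.mem_compl]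
    · simp [h]
  have hsum : ∀ (s : Finset V), ∑ u ∈ s, ∑ w, (if X.Adj u w then (1:ℕ) else 0) = d * s.card := by
    intro s
    have : ∀ u : V, ∑ w, (if X.Adj u w then (1:ℕ) else 0) = d := by
      intro u
      rw [Finset.sum_boole]
      simp [deg_filter X hreg u]
    rw [Finset.sum_congr rfl fun u _ => this u, Finset.sum_const, smul_eq_mul, mul_comm]
  have key : ∑ u ∈ V₁, ∑ w, (if X.Adj u w then (1:ℕ) else 0)
      = ∑ w ∈ V₁ᶜ, ∑ u, (if X.Adj u w then (1:ℕ) else 0) := by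
    have pull : ∀ (s : Finset V) (F : V → ℕ), ∑ u ∈ s, F u
        = ∑ u, (if u ∈ s then F u else 0) := by
      intro s F
      have := Finset.sum_ite_mem Finset.univ s F
      rw [Finset.univ_inter] at this
      rw [this]
    have l1 : ∑ u ∈ V₁, ∑ w, (if X.Adj u w then (1:ℕ) else 0)
        = ∑ u, ∑ w, (if u ∈ V₁ then if X.Adj u w then (1:ℕ) else 0 else 0) := by
      rw [pull V₁]
      refine Finset.sum_congr rfl fun u _ => ?_
      split <;> simp
    have l2 : ∑ w ∈ V₁ᶜ, ∑ u, (if X.Adj u w then (1:ℕ) else 0)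
        = ∑ w, ∑ u, (if w ∈ V₁ᶜ then if X.Adj u w then (1:ℕ) else 0 else 0) := by
      rw [pull V₁ᶜ]
      refine Finset.sum_congr rfl fun w _ => ?_
      split <;> simp
    rw [l1, l2, Finset.sum_comm]
    exact Finset.sum_congr rfl fun w _ => Finset.sum_congr rfl fun u _ => e1 u w
  have hsum2 : ∑ w ∈ V₁ᶜ, ∑ u, (if X.Adj u w then (1:ℕ) else 0) = d * V₁ᶜ.card := by
    have : ∀ w : V, ∑ u, (if X.Adj u w then (1:ℕ) else 0) = d := by
      intro w
      have : ∀ u : V, X.Adj u w ↔ X.Adj w u := fun u => X.adj_comm u w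
      simp_rw [this]
      rw [Finset.sum_boole]
      simp [deg_filter X hreg w]
    rw [Finset.sum_congr rfl fun w _ => this w, Finset.sum_const, smul_eq_mul, mul_comm]
  have := (hsum V₁).symm.trans (key.trans hsum2)
  exact Nat.eq_of_mul_eq_mul_left hd this

lemma rdf_lower {V : Type*} [Fintype V] [DecidableEq V] (X : SimpleGraph V)
    [DecidableRel X.Adj] {d : ℕ} (hd : 0 < d)
    (hreg : X.IsRegularOfDegree d) (f : V → Finset (Fin d))
    (hf : IsKRDF X d f) :
    Fintype.card V ≤ 2 * rdfWeight f := by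
  classical
  set W := rdfWeight f with hW
  set E : Finset V := univ.filter (fun u => f u = ∅) with hE
  -- nonempty vertices bound
  have h1 : Eᶜ.card ≤ W := by
    calc Eᶜ.card = ∑ u ∈ Eᶜ, 1 := by rw [Finset.card_eq_sum_ones]
    _ ≤ ∑ u ∈ Eᶜ, (f u).card := by
        refine Finset.sum_le_sum fun u hu => ?_
        have : f u ≠ ∅ := by
          simp only [hE, Finset.mem_compl, Finset.mem_filter, Finset.mem_univ,
            true_and] at hu
          exact hu
        exact Finset.card_pos.mpr (Finset.nonempty_iff_ne_empty.mpr this)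
    _ ≤ ∑ u, (f u).card := Finset.sum_le_sum_of_subset (Finset.subset_univ _)
  -- empty vertices bound
  have key : ∀ w ∈ E, d ≤ ∑ u ∈ univ.filter (fun u => X.Adj w u), (f u).card := by
    intro w hw
    have hw' : f w = ∅ := by
      simp only [hE, Finset.mem_filter, Finset.mem_univ, true_and] at hw
      exact hw
    have hsub : (univ : Finset (Fin d)) ⊆
        (univ.filter (fun u => X.Adj w u)).biUnion f := by
      intro c _
      obtain ⟨u, hu, hc⟩ := hf w hw' c
      exact Finset.mem_biUnion.mpr ⟨u, by simp [hu], hc⟩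
    calc d = (univ : Finset (Fin d)).card := by simp
      _ ≤ ((univ.filter (fun u => X.Adj w u)).biUnion f).card :=
          Finset.card_le_card hsub
      _ ≤ ∑ u ∈ univ.filter (fun u => X.Adj w u), (f u).card :=
          Finset.card_biUnion_le
  have h2 : d * E.card ≤ d * W := by
    calc d * E.card = ∑ w ∈ E, d := by rw [Finset.sum_const, smul_eq_mul, mul_comm]
      _ ≤ ∑ w ∈ E, ∑ u ∈ univ.filter (fun u => X.Adj w u), (f u).card :=
          Finset.sum_le_sum key
      _ = ∑ w ∈ E, ∑ u, (if X.Adj w u then (f u).card else 0) := by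
          refine Finset.sum_congr rfl fun w _ => ?_
          rw [Finset.sum_filter]
      _ ≤ ∑ w, ∑ u, (if X.Adj w u then (f u).card else 0) :=
          Finset.sum_le_sum_of_subset (Finset.subset_univ _)
      _ = ∑ u, ∑ w, (if X.Adj w u then (f u).card else 0) := Finset.sum_comm
      _ = ∑ u, (univ.filter (fun w => X.Adj u w)).card * (f u).card := by
          refine Finset.sum_congr rfl fun u _ => ?_
          rw [← Finset.sum_filter, Finset.sum_const, smul_eq_mul]
          have : (univ.filter (fun w => X.Adj w u)) = (univ.filter (fun w => X.Adj u w)) := by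
            refine Finset.filter_congr fun w _ => ?_
            simp [X.adj_comm]
          rw [this]
      _ = ∑ u, d * (f u).card := by
          refine Finset.sum_congr rfl fun u _ => ?_
          rw [deg_filter X hreg u]
      _ = d * W := by rw [← Finset.mul_sum]; rfl
  have h3 : E.card ≤ W := Nat.le_of_mul_le_mul_left h2 hd
  have h4 : Fintype.card V = E.card + Eᶜ.card := (Finset.card_add_card_compl E).symm
  omega

open scoped Classical in
/-- Block criterion: let `X` be connected bipartite vertex-transitive `d`-regular on
`n` vertices with bipartition class `V₁`, and let `G` be a vertex-transitive group of
automorphisms. If `B ⊆ V₁` is a block for `G` with `|B| = n/(2d)` and some `v ∈ B` has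
its neighborhood meeting exactly `d` distinct translates `B^g`, then `X` is `d`-RDR. -/
theorem rdr_of_block {V : Type*} [Fintype V] (X : SimpleGraph V) (d : ℕ)
    (hd : 0 < d)
    (hconn : X.Connected)
    (V₁ : Finset V)
    (hbip : ∀ u v, X.Adj u v → (u ∈ V₁ ↔ v ∉ V₁))
    (hreg : X.IsRegularOfDegree d)
    (G : Subgroup (Equiv.Perm V))
    (hGaut : ∀ g ∈ G, ∀ a b, X.Adj a b ↔ X.Adj (g a) (g b))
    (hGtrans : ∀ u v : V, ∃ g ∈ G, g u = v)
    (B : Finset V)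
    (hBV₁ : B ⊆ V₁)
    (hblock : ∀ g ∈ G, B.image g = B ∨ Disjoint (B.image g) B)
    (hBcard : B.card * (2 * d) = Fintype.card V)
    (v : V) (hvB : v ∈ B)
    (hmeets : {S : Finset V | (∃ g ∈ G, S = B.image g) ∧
        ∃ u ∈ S, X.Adj v u}.ncard = d) :
    2 * rainbowDomNum X d = Fintype.card V := by
  classical
  have hvV₁ : v ∈ V₁ := hBV₁ hvB
  -- any two translates of B are equal or disjoint
  have hblk : ∀ a ∈ G, ∀ b ∈ G,
      B.image ⇑a = B.image ⇑b ∨ Disjoint (B.image ⇑a) (B.image ⇑b) := by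
    intro a ha b hb
    have hmem : a⁻¹ * b ∈ G := mul_mem (inv_mem ha) hb
    have himg : B.image ⇑(a⁻¹ * b) = (B.image ⇑b).image ⇑a⁻¹ := by
      rw [Finset.image_image, Equiv.Perm.coe_mul]
    have cancel : ∀ s : Finset V, (s.image ⇑a⁻¹).image ⇑a = s := by
      intro s
      rw [Finset.image_image]
      have : (⇑a ∘ ⇑a⁻¹) = id := by
        funext x; simp
      rw [this, Finset.image_id]
    rcases hblock _ hmem with h | h
    · left
      rw [himg] at h
      have := congrArg (fun s : Finset V => s.image ⇑a) h
      simp only [cancel] at this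
      exact this.symm
    · right
      rw [himg] at h
      have := (Finset.disjoint_image a.injective).mpr h
      rw [cancel] at this
      exact this.symm
  -- automorphisms preserve or swap the two sides
  have hside : ∀ g ∈ G, ∀ x y : V,
      ((x ∈ V₁) ↔ (y ∈ V₁)) ↔ ((g x ∈ V₁) ↔ (g y ∈ V₁)) :=
    fun g hg => side_lemma X V₁ hbip hconn g (hGaut g hg)
  -- size of the second side
  have hV2card : V₁ᶜ.card = d * B.card := by
    have h12 := bip_half X hd hreg V₁ hbip
    have hadd : V₁.card + V₁ᶜ.card = Fintype.card V := Finset.card_add_card_compl V₁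
    have h2 : 2 * V₁ᶜ.card = 2 * (d * B.card) := by
      calc 2 * V₁ᶜ.card = V₁.card + V₁ᶜ.card := by rw [h12]; ring
        _ = Fintype.card V := hadd
        _ = 2 * (d * B.card) := by rw [← hBcard]; ring
    exact Nat.eq_of_mul_eq_mul_left two_pos h2
  -- the family of blocks meeting N(v)
  set M : Set (Finset V) := {S : Finset V | (∃ g ∈ G, S = B.image ⇑g) ∧
      ∃ u ∈ S, X.Adj v u} with hM
  have hMfin : M.Finite := Set.toFinite M
  set 𝓢 : Finset (Finset V) := hMfin.toFinset with h𝓢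
  have mem𝓢 : ∀ {S : Finset V}, S ∈ 𝓢 ↔ ((∃ g ∈ G, S = B.image ⇑g) ∧
      ∃ u ∈ S, X.Adj v u) := by
    intro S
    rw [h𝓢, Set.Finite.mem_toFinset]
    rfl
  have h𝓢card : 𝓢.card = d := by
    rw [h𝓢, ← Set.ncard_eq_toFinset_card M hMfin]
    exact hmeets
  have hblkS : ∀ S ∈ 𝓢, ∃ g ∈ G, S = B.image ⇑g := fun S hS => (mem𝓢.mp hS).1
  have hadjS : ∀ S ∈ 𝓢, ∃ u ∈ S, X.Adj v u := fun S hS => (mem𝓢.mp hS).2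
  have hsubS : ∀ S ∈ 𝓢, S ⊆ V₁ᶜ := by
    intro S hS y hy
    obtain ⟨u, hu, hadj⟩ := hadjS _ hS
    obtain ⟨g, hg, rfl⟩ := hblkS S hS
    obtain ⟨b1, hb1, rfl⟩ := Finset.mem_image.mp hy
    obtain ⟨b2, hb2, hb2e⟩ := Finset.mem_image.mp hu
    have huV : u ∉ V₁ := (hbip v u hadj).mp hvV₁
    have hss : g b1 ∈ V₁ ↔ g b2 ∈ V₁ :=
      (hside g hg b1 b2).mp ⟨fun _ => hBV₁ hb2, fun _ => hBV₁ hb1⟩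
    rw [hb2e] at hss
    rw [Finset.mem_compl]
    tauto
  -- generic covering lemma
  have hcover : ∀ (T : Finset (Finset V)),
      (∀ S ∈ T, ∃ g ∈ G, S = B.image ⇑g) → (∀ S ∈ T, S ⊆ V₁ᶜ) →
      T.card = d → T.biUnion id = V₁ᶜ := by
    intro T hTblk hTsub hTcard
    have hdisj : ∀ S1 ∈ T, ∀ S2 ∈ T, S1 ≠ S2 → Disjoint (id S1) (id S2) := by
      intro S1 h1 S2 h2 hne
      obtain ⟨a, ha, rfl⟩ := hTblk _ h1
      obtain ⟨b, hb, rfl⟩ := hTblk _ h2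
      rcases hblk a ha b hb with h | h
      · exact absurd h hne
      · exact h
    have hcard : (T.biUnion id).card = d * B.card := by
      rw [Finset.card_biUnion hdisj]
      have : ∀ S ∈ T, (id S : Finset V).card = B.card := by
        intro S hS
        obtain ⟨a, _, rfl⟩ := hTblk _ hS
        exact Finset.card_image_of_injective B a.injective
      rw [Finset.sum_congr rfl this, Finset.sum_const, smul_eq_mul, hTcard]
    have hsub : T.biUnion id ⊆ V₁ᶜ := by
      intro x hx
      obtain ⟨S, hS, hxS⟩ := Finset.mem_biUnion.mp hx
      exact hTsub S hS hxS
    refine (Finset.eq_of_subset_of_card_le hsub ?_)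
    rw [hcard, hV2card]
  have hUnion𝓢 : 𝓢.biUnion id = V₁ᶜ := hcover 𝓢 hblkS hsubS h𝓢card
  -- the coloring
  have eqv : {x // x ∈ 𝓢} ≃ Fin d := 𝓢.equivFinOfCardEq h𝓢card
  set F : V → Finset (Fin d) :=
    fun u => univ.filter (fun c => u ∈ ((eqv.symm c : Finset V))) with hF
  have hmemF : ∀ u c, c ∈ F u ↔ u ∈ ((eqv.symm c : Finset V)) := by
    intro u c
    simp [hF]
  have pull : ∀ (s : Finset V), ∑ u, (if u ∈ s then (1:ℕ) else 0) = s.card := by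
    intro s
    have := Finset.sum_ite_mem Finset.univ s (fun _ => (1:ℕ))
    rw [Finset.univ_inter] at this
    rw [this, Finset.sum_const, smul_eq_mul, mul_one]
  have hwt : rdfWeight F = d * B.card := by
    have step : ∀ u, (F u).card = ∑ c, (if u ∈ ((eqv.symm c : Finset V)) then (1:ℕ) else 0) := by
      intro u
      rw [hF]
      rw [Finset.card_filter]
    calc rdfWeight F = ∑ u, (F u).card := rfl
      _ = ∑ u, ∑ c, (if u ∈ ((eqv.symm c : Finset V)) then (1:ℕ) else 0) :=
          Finset.sum_congr rfl fun u _ => step u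
      _ = ∑ c, ∑ u, (if u ∈ ((eqv.symm c : Finset V)) then (1:ℕ) else 0) := Finset.sum_comm
      _ = ∑ c : Fin d, ((eqv.symm c : Finset V)).card :=
          Finset.sum_congr rfl fun c _ => pull _
      _ = ∑ c : Fin d, B.card := by
          refine Finset.sum_congr rfl fun c _ => ?_
          obtain ⟨a, _, hae⟩ := hblkS _ (eqv.symm c).2
          rw [hae]
          exact Finset.card_image_of_injective B a.injective
      _ = d * B.card := by rw [Finset.sum_const, Finset.card_univ, Fintype.card_fin, smul_eq_mul]
  -- F is a d-RDF
  have hkrdf : IsKRDF X d F := by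
    intro u hu c
    have huV₁ : u ∈ V₁ := by
      by_contra hu1
      have hmem : u ∈ V₁ᶜ := Finset.mem_compl.mpr hu1
      rw [← hUnion𝓢] at hmem
      obtain ⟨S, hS, hus⟩ := Finset.mem_biUnion.mp hmem
      have : (eqv ⟨S, hS⟩) ∈ F u := by
        rw [hmemF]
        simpa [Equiv.symm_apply_apply] using hus
      rw [hu] at this
      simp at this
    obtain ⟨g, hg, hgv⟩ := hGtrans v u
    have hpres : ∀ x : V, x ∈ V₁ ↔ g x ∈ V₁ := by
      intro x
      have h := hside g hg v x
      rw [hgv] at h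
      tauto
    set T : Finset (Finset V) := 𝓢.image (fun S => S.image ⇑g) with hT
    have hTblk : ∀ S ∈ T, ∃ h ∈ G, S = B.image ⇑h := by
      intro S hS
      obtain ⟨S0, hS0, rfl⟩ := Finset.mem_image.mp hS
      obtain ⟨a, ha, rfl⟩ := hblkS _ hS0
      refine ⟨g * a, mul_mem hg ha, ?_⟩
      rw [Finset.image_image, Equiv.Perm.coe_mul]
    have hTsub : ∀ S ∈ T, S ⊆ V₁ᶜ := by
      intro S hS x hx
      obtain ⟨S0, hS0, rfl⟩ := Finset.mem_image.mp hS
      obtain ⟨x0, hx0, rfl⟩ := Finset.mem_image.mp hx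
      have hmem := hsubS S0 hS0 hx0
      rw [Finset.mem_compl] at hmem ⊢
      intro hgx
      exact hmem ((hpres x0).mpr hgx)
    have hTcard : T.card = d := by
      rw [hT, Finset.card_image_of_injective _ (Finset.image_injective g.injective), h𝓢card]
    have hUT : T.biUnion id = V₁ᶜ := hcover T hTblk hTsub hTcard
    have hS₀mem : ((eqv.symm c : Finset V)) ∈ 𝓢 := (eqv.symm c).2
    obtain ⟨w₀, hw₀, hadj₀⟩ := hadjS _ hS₀mem
    have hw₀V₂ : w₀ ∈ V₁ᶜ := hsubS _ hS₀mem hw₀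
    rw [← hUT] at hw₀V₂
    obtain ⟨S', hS', hw₀S'⟩ := Finset.mem_biUnion.mp hw₀V₂
    obtain ⟨S1, hS1, rfl⟩ := Finset.mem_image.mp hS'
    have heq : ((eqv.symm c : Finset V)) = S1.image ⇑g := by
      obtain ⟨a, ha, hae⟩ := hblkS _ hS₀mem
      obtain ⟨b, hb, hbe⟩ := hTblk _ hS'
      rcases hblk a ha b hb with h | h
      · rw [hae, hbe, h]
      · exfalso
        rw [← hae, ← hbe] at h
        exact Finset.disjoint_left.mp h hw₀ hw₀S'
    obtain ⟨w₁, hw₁, hadj₁⟩ := hadjS _ hS1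
    refine ⟨g w₁, ?_, ?_⟩
    · have := (hGaut g hg v w₁).mp hadj₁
      rwa [hgv] at this
    · rw [hmemF, heq]
      exact Finset.mem_image_of_mem _ hw₁
  -- conclude
  have hmemSet : d * B.card ∈ {w | ∃ f, IsKRDF X d f ∧ rdfWeight f = w} := ⟨F, hkrdf, hwt⟩
  have hlb : ∀ w ∈ {w | ∃ f, IsKRDF X d f ∧ rdfWeight f = w}, d * B.card ≤ w := by
    rintro w ⟨f, hf, rfl⟩
    have hle := rdf_lower X hd hreg f hf
    have hn : Fintype.card V = 2 * (d * B.card) := by rw [← hBcard]; ring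
    rw [hn] at hle
    exact Nat.le_of_mul_le_mul_left hle two_pos
  have hnum : rainbowDomNum X d = d * B.card :=
    le_antisymm (Nat.sInf_le hmemSet) (le_csInf ⟨_, hmemSet⟩ hlb)
  rw [hnum, ← hBcard]
  ring
end

section
/- Let n = 6m with m ≥ 2, and k = 3m - 1 with k ≡ ±1 (mod 6) (i.e. m even), so that GP(n, n/2 - 1) is vertex-transitive and 3-RDR. Then every edge of GP(6m, 3m-1) lies in exactly two 6-cycles; in particular the graph is girth-regular with signature (2,2,2) and girth 6. -/
open SimpleGraph Finset

/-- The generalized Petersen graph `GP(n,k)`: outer vertices `Sum.inl i`, inner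
vertices `Sum.inr i`, with outer edges, spokes and inner edges. -/
def GP (n k : ℕ) : SimpleGraph (ZMod n ⊕ ZMod n) where
  Adj x y := x ≠ y ∧
    (match x, y with
     | Sum.inl i, Sum.inl j => j = i + 1 ∨ i = j + 1
     | Sum.inl i, Sum.inr j => i = j
     | Sum.inr i, Sum.inl j => i = j
     | Sum.inr i, Sum.inr j => j = i + (k : ZMod n) ∨ i = j + (k : ZMod n))
  symm := ⟨by
    rintro (i | i) (j | j) ⟨hne, h⟩ <;>
      refine ⟨hne.symm, ?_⟩ <;> simp only at h ⊢ <;> tauto⟩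
  loopless := ⟨by rintro (i | i) ⟨hne, -⟩ <;> exact hne rfl⟩

open scoped Classical in
/-- A finset of edges is (the edge set of) a `6`-cycle of `X` if it is the set of
edges traversed by an injective closed walk indexed by `ZMod 6`. -/
def Is6CycleEdgeSet {V : Type*} (X : SimpleGraph V) (s : Finset (Sym2 V)) : Prop :=
  ∃ C : ZMod 6 → V, Function.Injective C ∧ (∀ t : ZMod 6, X.Adj (C t) (C (t + 1))) ∧
    s = Finset.image (fun t : ZMod 6 => s(C t, C (t + 1))) Finset.univ

/-!
Along a cycle of `GP(n, k)` the rim changes exactly at the spokes, two spokes are never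
consecutive, and between two spokes the cycle runs monotonically along one rim, because turning
back would revisit a vertex.

Let `n = 6m` and `k = 3m - 1` with `m ≥ 2` even, and take a cycle of length `L ≤ 6`. It cannot
stay on one rim: `k² ≡ 1 (mod n)`, so this would force `n ∣ L`. As spokes come in pairs and are
never adjacent, it has exactly two of them, separating an outer run of `p` steps and an inner
run of `q` steps with `p + q = L - 2 ≤ 4` and `±p ± q k ≡ 0 (mod 6m)`. As `k ≡ -1 (mod 3m)`, this
forces `p = q = 2` with equal signs, and indeed `2 + 2k = 6m`. So the girth is `6`, the
`6`-cycles are exactly the hexagons `u_a u_{a+1} u_{a+2} v_{a+2} v_{a+2+k} v_a`, and every edge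
lies on exactly two of them.
-/

section CycleMap

variable {V : Type*} {L : ℕ}

def IsCycleMap (G : SimpleGraph V) (C : ZMod L → V) : Prop :=
  Function.Injective C ∧ ∀ t, G.Adj (C t) (C (t + 1))

open scoped Classical in
noncomputable def edgeImage [NeZero L] (C : ZMod L → V) : Finset (Sym2 V) :=
  Finset.image (fun t => s(C t, C (t + 1))) Finset.univ

lemma is6CycleEdgeSet_iff {G : SimpleGraph V} {s : Finset (Sym2 V)} :
    Is6CycleEdgeSet G s ↔ ∃ C : ZMod 6 → V, IsCycleMap G C ∧ s = edgeImage C := by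
  simp only [Is6CycleEdgeSet, IsCycleMap, edgeImage, and_assoc]

lemma mem_edgeImage [NeZero L] {C : ZMod L → V} {e : Sym2 V} :
    e ∈ edgeImage C ↔ ∃ t, s(C t, C (t + 1)) = e := by
  simp [edgeImage]

lemma edgeImage_comp_sub_right [NeZero L] (C : ZMod L → V) (c : ZMod L) :
    edgeImage (fun u => C (u - c)) = edgeImage C := by
  ext e
  simp only [mem_edgeImage]
  constructor
  · rintro ⟨u, rfl⟩
    exact ⟨u - c, by rw [sub_add_eq_add_sub]⟩
  · rintro ⟨u, rfl⟩
    exact ⟨u + c, by rw [add_sub_cancel_right, add_right_comm, add_sub_cancel_right]⟩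

lemma edgeImage_comp_sub_left [NeZero L] (C : ZMod L → V) (c : ZMod L) :
    edgeImage (fun u => C (c - u)) = edgeImage C := by
  ext e
  simp only [mem_edgeImage]
  constructor
  · rintro ⟨u, rfl⟩
    exact ⟨c - u - 1, by rw [Sym2.eq_swap, sub_add_cancel, sub_sub]⟩
  · rintro ⟨u, rfl⟩
    exact ⟨c - u - 1, by
      rw [Sym2.eq_swap, show c - (c - u - 1 + 1) = u by ring, show c - (c - u - 1) = u + 1 by ring]⟩

lemma IsCycleMap.apply_add_two_ne {G : SimpleGraph V} {C : ZMod L → V} (hC : IsCycleMap G C)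
    (hL : 3 ≤ L) (t : ZMod L) : C (t + 2) ≠ C t := by
  intro h
  have h2 : ((2 : ℕ) : ZMod L) = 0 := by simpa using hC.1 h
  rw [ZMod.natCast_eq_zero_iff] at h2
  exact absurd (Nat.le_of_dvd two_pos h2) (by omega)

lemma SimpleGraph.Walk.IsCycle.isCycleMap {G : SimpleGraph V} {a : V} {w : G.Walk a a}
    (hw : w.IsCycle) : IsCycleMap G (fun t : ZMod w.length => w.getVert t.val) := by
  have hL := hw.three_le_length
  have : NeZero w.length := ⟨by omega⟩
  refine ⟨fun s t h => ZMod.val_injective _ (hw.getVert_injOn' ?_ ?_ h), fun t => ?_⟩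
  · have := ZMod.val_lt s; simp only [Set.mem_ofPred_eq]; omega
  · have := ZMod.val_lt t; simp only [Set.mem_ofPred_eq]; omega
  · have ht := ZMod.val_lt t
    have hwrap : w.getVert ((t.val + 1) % w.length) = w.getVert (t.val + 1) := by
      rcases Nat.lt_or_ge (t.val + 1) w.length with h | h
      · rw [Nat.mod_eq_of_lt h]
      · rw [show t.val + 1 = w.length by omega, Nat.mod_self, Walk.getVert_zero,
          Walk.getVert_length]
    simp only
    rw [ZMod.val_add, ZMod.val_one'' (by omega), hwrap]
    exact w.adj_getVert_succ ht

lemma IsCycleMap.egirth_le {G : SimpleGraph V} {C : ZMod L → V} (hC : IsCycleMap G C)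
    (hL : 3 ≤ L) : G.egirth ≤ L := by
  obtain ⟨L, rfl⟩ : ∃ L', L = L' + 3 := ⟨L - 3, by omega⟩
  let f : cycleGraph (L + 3) →g G :=
    { toFun := C
      map_rel' := by
        rintro a b (h | h)
        · rw [← sub_add_cancel a b, h, add_comm]
          exact (hC.2 b).symm
        · rw [← sub_add_cancel b a, h, add_comm]
          exact hC.2 a }
  have := (Walk.isCycle_map_iff_of_injective (f := f) hC.1).mpr (cycleGraph.isCycle_cycle (n := L))
  simpa using egirth_le_length this

lemma ZMod.six_cases (j : ZMod 6) : j = 0 ∨ j = 1 ∨ j = 2 ∨ j = 3 ∨ j = 4 ∨ j = 5 := by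
  revert j; decide

lemma ZMod.exists_six {P : ZMod 6 → Prop} :
    (∃ j, P j) ↔ P 0 ∨ P 1 ∨ P 2 ∨ P 3 ∨ P 4 ∨ P 5 := by
  constructor
  · rintro ⟨j, hj⟩
    obtain rfl | rfl | rfl | rfl | rfl | rfl := ZMod.six_cases j <;> tauto
  · rintro (h | h | h | h | h | h) <;> exact ⟨_, h⟩

lemma mem_edgeImage_six {D : ZMod 6 → V} {e : Sym2 V} :
    e ∈ edgeImage D ↔ s(D 0, D 1) = e ∨ s(D 1, D 2) = e ∨ s(D 2, D 3) = e ∨ s(D 3, D 4) = e ∨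
      s(D 4, D 5) = e ∨ s(D 5, D 0) = e := by
  rw [mem_edgeImage, ZMod.exists_six]
  rfl

lemma forall_adj_six {G : SimpleGraph V} {D : ZMod 6 → V} :
    (∀ t, G.Adj (D t) (D (t + 1))) ↔ G.Adj (D 0) (D 1) ∧ G.Adj (D 1) (D 2) ∧
      G.Adj (D 2) (D 3) ∧ G.Adj (D 3) (D 4) ∧ G.Adj (D 4) (D 5) ∧ G.Adj (D 5) (D 0) := by
  constructor
  · intro h
    exact ⟨h 0, h 1, h 2, h 3, h 4, h 5⟩
  · rintro ⟨h₀, h₁, h₂, h₃, h₄, h₅⟩ t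
    obtain rfl | rfl | rfl | rfl | rfl | rfl := ZMod.six_cases t
    exacts [h₀, h₁, h₂, h₃, h₄, h₅]

end CycleMap

-- The quantifiers over `p` and `q` are bounded so that `decide` applies.
lemma cyclic_bool_word_cases {L : ℕ} (hL3 : 3 ≤ L) (hL6 : L ≤ 6) (f : ZMod L → Bool) :
    (∃ t, f (t + 1) ≠ f t ∧ f (t + 2) ≠ f (t + 1)) ∨ (∀ t, f (t + 1) = f t) ∨
    ∃ t : ZMod L, ∃ p < L, ∃ q < L, 1 ≤ p ∧ 1 ≤ q ∧ p + q + 2 = L ∧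
      (∀ i ≤ p, f (t + 1 + (i : ℕ)) = true) ∧ ∀ i ≤ q, f (t + (p + 2 : ℕ) + (i : ℕ)) = false := by
  revert f
  interval_cases L <;> decide

lemma ZMod.natCast_ne_zero_of_lt {n a : ℕ} (ha : 0 < a) (h : a < n) : (a : ZMod n) ≠ 0 := by
  rw [Ne, ZMod.natCast_eq_zero_iff]
  exact fun hdvd => absurd (Nat.le_of_dvd ha hdvd) (by omega)

namespace GP

variable {n k : ℕ}

def pos : ZMod n ⊕ ZMod n → ZMod n := Sum.elim id id

def rimStep (k : ℕ) : Bool → ZMod n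
  | true => 1
  | false => k

lemma eq_of_isLeft_eq_of_pos_eq {x y : ZMod n ⊕ ZMod n} (h₁ : x.isLeft = y.isLeft)
    (h₂ : pos x = pos y) : x = y := by
  cases x <;> cases y <;> simp_all [pos]

lemma eq_inl_of_isLeft {x : ZMod n ⊕ ZMod n} (h : x.isLeft = true) : x = .inl (pos x) := by
  cases x <;> simp_all [pos]

lemma eq_inr_of_not_isLeft {x : ZMod n ⊕ ZMod n} (h : x.isLeft = false) :
    x = .inr (pos x) := by
  cases x <;> simp_all [pos]

lemma pos_eq_of_adj_of_isLeft_ne {x y : ZMod n ⊕ ZMod n} (h : (GP n k).Adj x y)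
    (hxy : x.isLeft ≠ y.isLeft) : pos y = pos x := by
  rcases x with i | i <;> rcases y with j | j <;> simp_all [GP, pos]

lemma pos_sub_eq_of_adj_of_isLeft_eq {x y : ZMod n ⊕ ZMod n} (h : (GP n k).Adj x y)
    (hxy : x.isLeft = y.isLeft) :
    pos y - pos x = rimStep k x.isLeft ∨ pos y - pos x = -rimStep k x.isLeft := by
  rcases x with i | i <;> rcases y with j | j <;> simp_all [GP, pos, rimStep] <;>
    rcases h.2 with rfl | rfl <;> simp

lemma exists_eq_of_mem_edgeSet {e : Sym2 (ZMod n ⊕ ZMod n)} (he : e ∈ (GP n k).edgeSet) :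
    ∃ a, e = s(.inl a, .inl (a + 1)) ∨ e = s(.inl a, .inr a) ∨ e = s(.inr a, .inr (a + k)) := by
  induction e using Sym2.ind with
  | _ x y =>
    rcases x with i | i <;> rcases y with j | j <;> simp only [mem_edgeSet, GP] at he
    · rcases he.2 with rfl | rfl
      exacts [⟨i, Or.inl rfl⟩, ⟨j, Or.inl Sym2.eq_swap⟩]
    · obtain rfl : i = j := he.2
      exact ⟨i, Or.inr (Or.inl rfl)⟩
    · obtain rfl : i = j := he.2
      exact ⟨i, Or.inr (Or.inl Sym2.eq_swap)⟩
    · rcases he.2 with rfl | rfl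
      exacts [⟨i, Or.inr (Or.inr rfl)⟩, ⟨j, Or.inr (Or.inr Sym2.eq_swap)⟩]

section Cycle

variable {L : ℕ} {C : ZMod L → ZMod n ⊕ ZMod n}

lemma not_isLeft_ne_and_isLeft_ne (hC : IsCycleMap (GP n k) C) (hL : 3 ≤ L) (t : ZMod L) :
    ¬((C (t + 1)).isLeft ≠ (C t).isLeft ∧ (C (t + 2)).isLeft ≠ (C (t + 1)).isLeft) := by
  rintro ⟨h₁, h₂⟩
  have h₃ : t + 1 + 1 = t + 2 := by ring
  refine hC.apply_add_two_ne hL t (eq_of_isLeft_eq_of_pos_eq ?_ ?_)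
  · revert h₁ h₂
    cases (C t).isLeft <;> cases (C (t + 1)).isLeft <;> cases (C (t + 2)).isLeft <;> simp
  · rw [← h₃, pos_eq_of_adj_of_isLeft_ne (hC.2 (t + 1)) (by rw [h₃]; exact h₂.symm),
      pos_eq_of_adj_of_isLeft_ne (hC.2 t) h₁.symm]

lemma pos_sub_eq_pos_sub_of_isLeft_eq (hC : IsCycleMap (GP n k) C) (hL : 3 ≤ L) (t : ZMod L)
    (h₁ : (C (t + 1)).isLeft = (C t).isLeft) (h₂ : (C (t + 2)).isLeft = (C (t + 1)).isLeft) :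
    pos (C (t + 2)) - pos (C (t + 1)) = pos (C (t + 1)) - pos (C t) := by
  have h₃ : t + 1 + 1 = t + 2 := by ring
  have hback : pos (C (t + 2)) ≠ pos (C t) := fun h =>
    hC.apply_add_two_ne hL t (eq_of_isLeft_eq_of_pos_eq (h₂.trans h₁) h)
  have hs₁ := pos_sub_eq_of_adj_of_isLeft_eq (hC.2 t) h₁.symm
  have hs₂ := pos_sub_eq_of_adj_of_isLeft_eq (hC.2 (t + 1)) (by rw [h₃]; exact h₂.symm)
  rw [h₃, h₁] at hs₂
  rcases hs₁ with hs₁ | hs₁ <;> rcases hs₂ with hs₂ | hs₂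
  · rw [hs₁, hs₂]
  · exact absurd (by linear_combination hs₁ + hs₂) hback
  · exact absurd (by linear_combination hs₁ + hs₂) hback
  · rw [hs₁, hs₂]

lemma pos_add_natCast_mul (hC : IsCycleMap (GP n k) C) (hL : 3 ≤ L) {s : ZMod L} {p : ℕ}
    {b : Bool} (hrun : ∀ i ≤ p, (C (s + i)).isLeft = b) :
    ∀ i ≤ p, pos (C (s + i)) = pos (C s) + i * (pos (C (s + 1)) - pos (C s)) := by
  have hstep : ∀ i < p, pos (C (s + i + 1)) - pos (C (s + i)) = pos (C (s + 1)) - pos (C s) := by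
    intro i hi
    induction i with
    | zero => simp
    | succ i ih =>
      rw [← ih (by omega)]
      have h := pos_sub_eq_pos_sub_of_isLeft_eq hC hL (s + i)
        (by rw [hrun i (by omega)]; simpa [add_assoc] using hrun (i + 1) (by omega))
        (by
          rw [show s + i + 1 = s + (i + 1 : ℕ) by push_cast; ring, hrun (i + 1) (by omega)]
          simpa [add_assoc, one_add_one_eq_two] using hrun (i + 2) (by omega))
      convert h using 3 <;> push_cast <;> ring_nf
  intro i hi
  induction i with
  | zero => simp
  | succ i ih =>
    rw [show s + ((i + 1 : ℕ) : ZMod L) = s + i + 1 by push_cast; ring]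
    push_cast
    linear_combination ih (by omega) + hstep i (by omega)

-- The steps `±1` and `±k` are units, so a cycle staying on one rim has length divisible by `n`.
lemma exists_isLeft_ne (hk : (k : ZMod n) * k = 1) (hC : IsCycleMap (GP n k) C) (hL : 3 ≤ L)
    (hLn : (L : ZMod n) ≠ 0) : ∃ t, (C (t + 1)).isLeft ≠ (C t).isLeft := by
  by_contra! hconst
  have hrun : ∀ i ≤ L, (C (0 + i)).isLeft = (C 0).isLeft := by
    intro i _
    induction i with
    | zero => simp
    | succ i ih => rw [Nat.cast_succ, ← add_assoc, hconst, ih (by omega)]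
  have hcycle := pos_add_natCast_mul hC hL hrun L le_rfl
  rw [ZMod.natCast_self, add_zero, zero_add, left_eq_add] at hcycle
  have hr : rimStep (n := n) k (C 0).isLeft * rimStep k (C 0).isLeft = 1 := by
    cases (C 0).isLeft <;> simp [rimStep, hk]
  rcases pos_sub_eq_of_adj_of_isLeft_eq (hC.2 0) (hconst 0).symm with hd | hd <;>
    rw [zero_add] at hd <;> rw [hd] at hcycle <;> apply hLn
  · linear_combination rimStep (n := n) k (C 0).isLeft * hcycle - (L : ZMod n) * hr
  · linear_combination -rimStep (n := n) k (C 0).isLeft * hcycle - (L : ZMod n) * hr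

lemma exists_two_runs (hC : IsCycleMap (GP n k) C) (hL : 3 ≤ L) {t : ZMod L} {p q : ℕ}
    (hp : 1 ≤ p) (hq : 1 ≤ q) (hpq : p + q + 2 = L)
    (hout : ∀ i ≤ p, (C (t + 1 + i)).isLeft = true)
    (hin : ∀ i ≤ q, (C (t + (p + 2 : ℕ) + i)).isLeft = false) :
    ∃ a ε ε' : ZMod n, (ε = 1 ∨ ε = -1) ∧ (ε' = 1 ∨ ε' = -1) ∧ p * ε + q * (ε' * k) = 0 ∧
      (∀ i ≤ p, C (t + 1 + i) = .inl (a + i * ε)) ∧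
      ∀ i ≤ q, C (t + (p + 2 : ℕ) + i) = .inr (a + p * ε + i * (ε' * k)) := by
  set s := t + ((p + 2 : ℕ) : ZMod L) with hs
  have hsq : s + q = t := by
    rw [hs, add_assoc, ← Nat.cast_add, show p + 2 + q = L by omega, ZMod.natCast_self, add_zero]
  have hs₁ : t + 1 + p + 1 = s := by rw [hs]; push_cast; ring
  have hout₀ : (C (t + 1)).isLeft = true := by simpa using hout 0 (by omega)
  have hin₀ : (C s).isLeft = false := by simpa using hin 0 (by omega)
  have hε := pos_sub_eq_of_adj_of_isLeft_eq (hC.2 (t + 1))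
    (by rw [hout₀]; simpa using (hout 1 hp).symm)
  have hε' := pos_sub_eq_of_adj_of_isLeft_eq (hC.2 s)
    (by rw [hin₀]; simpa using (hin 1 hq).symm)
  rw [hout₀] at hε
  rw [hin₀] at hε'
  obtain ⟨ε', hε'₁, hε'₂⟩ : ∃ ε' : ZMod n, (ε' = 1 ∨ ε' = -1) ∧
      pos (C (s + 1)) - pos (C s) = ε' * k := by
    rcases hε' with h | h
    · exact ⟨1, Or.inl rfl, by rw [h, one_mul]; rfl⟩
    · exact ⟨-1, Or.inr rfl, by rw [h, neg_one_mul]; rfl⟩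
  have hrunOut := pos_add_natCast_mul hC hL hout
  have hrunIn := pos_add_natCast_mul hC hL hin
  have hspoke₀ : pos (C (t + 1)) = pos (C t) :=
    pos_eq_of_adj_of_isLeft_ne (hC.2 t) (by rw [hout₀, ← hsq, hin q le_rfl]; decide)
  have hspoke₁ : pos (C s) = pos (C (t + 1 + p)) := by
    rw [← hs₁]
    exact pos_eq_of_adj_of_isLeft_ne (hC.2 _) (by rw [hs₁, hin₀, hout p le_rfl]; decide)
  refine ⟨pos (C (t + 1)), _, ε', by simpa [rimStep] using hε, hε'₁, ?_, fun i hi => ?_,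
    fun i hi => ?_⟩
  · have hclose := hrunIn q le_rfl
    rw [hsq, hε'₂, hspoke₁, hrunOut p le_rfl, ← hspoke₀] at hclose
    linear_combination -hclose
  · rw [eq_inl_of_isLeft (hout i hi), hrunOut i hi]
  · rw [eq_inr_of_not_isLeft (hin i hi), hrunIn i hi, hε'₂, hspoke₁, hrunOut p le_rfl]

end Cycle

def hexagon (k : ℕ) (a ε : ZMod n) : ZMod 6 → ZMod n ⊕ ZMod n :=
  ![.inl a, .inl (a + ε), .inl (a + 2 * ε), .inr (a + 2 * ε), .inr (a + 2 * ε + ε * k), .inr a]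

lemma hexagon_neg_one (hk : 2 + 2 * (k : ZMod n) = 0) (a : ZMod n) :
    hexagon k a (-1) = fun u => hexagon k (a - 2) 1 (2 - u) := by
  funext u
  obtain rfl | rfl | rfl | rfl | rfl | rfl := ZMod.six_cases u
  all_goals
    simp [hexagon, show (2 : ZMod 6) - 0 = 2 from rfl, show (2 : ZMod 6) - 1 = 1 from rfl,
      show (2 : ZMod 6) - 3 = 5 from rfl, show (2 : ZMod 6) - 4 = 4 from rfl,
      show (2 : ZMod 6) - 5 = 3 from rfl]
  · ring
  · ring
  · ring
  · linear_combination -hk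

lemma eq_hexagon_comp_sub (hk : 2 + 2 * (k : ZMod n) = 0) {C : ZMod 6 → ZMod n ⊕ ZMod n}
    {t : ZMod 6} {a ε : ZMod n}
    (hC : ∀ i : ℕ, i ≤ 2 →
      C (t + 1 + i) = .inl (a + i * ε) ∧ C (t + 4 + i) = .inr (a + 2 * ε + i * (ε * k))) :
    C = fun u => hexagon k a ε (u - (t + 1)) := by
  funext u
  obtain ⟨j, rfl⟩ : ∃ j, u = t + 1 + j := ⟨u - (t + 1), by ring⟩
  rw [add_sub_cancel_left]
  obtain rfl | rfl | rfl | rfl | rfl | rfl := ZMod.six_cases j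
  · simpa [hexagon] using (hC 0 (by norm_num)).1
  · simpa [hexagon] using (hC 1 (by norm_num)).1
  · simpa [hexagon] using (hC 2 le_rfl).1
  · rw [show t + 1 + 3 = t + 4 + ((0 : ℕ) : ZMod 6) by push_cast; ring]
    simpa [hexagon] using (hC 0 (by norm_num)).2
  · rw [show t + 1 + 4 = t + 4 + ((1 : ℕ) : ZMod 6) by push_cast; ring]
    simpa [hexagon] using (hC 1 (by norm_num)).2
  · rw [show t + 1 + 5 = t + 4 + ((2 : ℕ) : ZMod 6) by push_cast; ring, (hC 2 le_rfl).2]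
    change Sum.inr _ = Sum.inr a
    push_cast
    rw [Sum.inr.injEq]
    linear_combination ε * hk

end GP

section Kappa

variable {m : ℕ}

local notation "κ" => ((3 * m - 1 : ℕ) : ZMod (6 * m))

lemma kappa_eq_intCast (hm : 1 ≤ m) : κ = ((3 * m - 1 : ℤ) : ZMod (6 * m)) := by
  push_cast [Nat.cast_sub (by omega : 1 ≤ 3 * m)]
  rfl

lemma two_add_two_mul_kappa (hm : 1 ≤ m) : (2 : ZMod (6 * m)) + 2 * κ = 0 := by
  have h : ((6 * m : ℕ) : ZMod (6 * m)) = 0 := ZMod.natCast_self _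
  rw [kappa_eq_intCast hm]
  push_cast at h ⊢
  linear_combination h

lemma kappa_mul_kappa (hm : 1 ≤ m) (he : Even m) : κ * κ = 1 := by
  obtain ⟨j, rfl⟩ := he
  have h : ((6 * (j + j) : ℕ) : ZMod (6 * (j + j))) = 0 := ZMod.natCast_self _
  rw [kappa_eq_intCast hm]
  push_cast at h ⊢
  linear_combination (3 * j - 1) * h

-- `κ ≡ -1 (mod 3m)`, so a relation `a + b κ = 0` forces `3m ∣ a - b`.
lemma intCast_add_mul_kappa_eq_zero_iff {a b : ℤ} (hab : |a - b| < 3 * m) :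
    (a : ZMod (6 * m)) + b * κ = 0 ↔ a = b ∧ Even b := by
  have hm : 1 ≤ m := by have := abs_nonneg (a - b); omega
  rw [kappa_eq_intCast hm, ← Int.cast_mul, ← Int.cast_add, ZMod.intCast_zmod_eq_zero_iff_dvd]
  push_cast
  constructor
  · rintro ⟨c, hc⟩
    have hab0 : a - b = 0 :=
      Int.eq_zero_of_abs_lt_dvd ⟨2 * c - b, by linear_combination hc⟩ hab
    refine ⟨by omega, c, ?_⟩
    have hm0 : (3 * m : ℤ) ≠ 0 := by omega
    have : (3 * m : ℤ) * b = 3 * m * (c + c) := by linear_combination hc - hab0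
    exact mul_left_cancel₀ hm0 this
  · rintro ⟨rfl, c, rfl⟩
    exact ⟨c, by ring⟩

lemma intCast_add_mul_kappa_ne_zero {a b : ℤ} (hab : |a - b| < 3 * m) (hne : a ≠ b) :
    (a : ZMod (6 * m)) + b * κ ≠ 0 :=
  fun h => hne ((intCast_add_mul_kappa_eq_zero_iff hab).1 h).1

lemma two_add_kappa_ne_zero (hm : 1 ≤ m) : (2 : ZMod (6 * m)) + κ ≠ 0 := by
  simpa using intCast_add_mul_kappa_ne_zero (m := m) (a := 2) (b := 1) (by simp; omega) (by simp)

lemma run_lengths_eq_two (hm : 2 ≤ m) {p q : ℕ} (hp : 1 ≤ p) (hpq : p + q ≤ 4)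
    {ε ε' : ZMod (6 * m)} (hε : ε = 1 ∨ ε = -1) (hε' : ε' = 1 ∨ ε' = -1)
    (h : p * ε + q * (ε' * κ) = 0) : p = 2 ∧ q = 2 ∧ ε = ε' := by
  have hsolve (a b : ℤ) (hab : |a - b| ≤ 4) (h : (a : ZMod (6 * m)) + b * κ = 0) :
      a = b ∧ ∃ r, b = r + r :=
    (intCast_add_mul_kappa_eq_zero_iff (by omega)).1 h
  rcases hε with rfl | rfl <;> rcases hε' with rfl | rfl
  · obtain ⟨_, r, _⟩ := hsolve p q (by rw [abs_le]; omega) (by push_cast; linear_combination h)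
    exact ⟨by omega, by omega, rfl⟩
  · obtain ⟨_, -⟩ := hsolve p (-q) (by rw [abs_le]; omega) (by push_cast; linear_combination h)
    omega
  · obtain ⟨_, -⟩ := hsolve (-p) q (by rw [abs_le]; omega) (by push_cast; linear_combination h)
    omega
  · obtain ⟨_, r, _⟩ := hsolve (-p) (-q) (by rw [abs_le]; omega)
      (by push_cast; linear_combination h)
    exact ⟨by omega, by omega, rfl⟩

end Kappa

namespace GP

variable {m : ℕ}

local notation "κ" => ((3 * m - 1 : ℕ) : ZMod (6 * m))

lemma short_cycle_shape (hm : 2 ≤ m) (he : Even m) {L : ℕ}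
    {C : ZMod L → ZMod (6 * m) ⊕ ZMod (6 * m)} (hC : IsCycleMap (GP (6 * m) (3 * m - 1)) C) (hL3 : 3 ≤ L) (hL6 : L ≤ 6) :
    L = 6 ∧ ∃ (t : ZMod L) (a ε : ZMod (6 * m)), (ε = 1 ∨ ε = -1) ∧
      ∀ i : ℕ, i ≤ 2 → C (t + 1 + i) = .inl (a + i * ε) ∧
        C (t + 4 + i) = .inr (a + 2 * ε + i * (ε * κ)) := by
  rcases cyclic_bool_word_cases hL3 hL6 (fun t => (C t).isLeft) with
    ⟨t, h₁, h₂⟩ | hconst | ⟨t, p, -, q, -, hp, hq, hpq, hout, hin⟩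
  · exact absurd ⟨h₁, h₂⟩ (not_isLeft_ne_and_isLeft_ne hC hL3 t)
  · obtain ⟨t, ht⟩ := exists_isLeft_ne (kappa_mul_kappa (by omega) he) hC hL3
      (ZMod.natCast_ne_zero_of_lt (by omega) (by omega))
    exact absurd (hconst t) ht
  · obtain ⟨a, ε, ε', hε, hε', hsum, hrunOut, hrunIn⟩ :=
      exists_two_runs hC hL3 hp hq hpq hout hin
    obtain ⟨rfl, rfl, rfl⟩ := run_lengths_eq_two hm hp (by omega) hε hε' hsum
    refine ⟨by omega, t, a, ε, hε, fun i hi => ⟨hrunOut i hi, ?_⟩⟩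
    have h := hrunIn i hi
    norm_num at h
    exact h

lemma six_le_egirth (hm : 2 ≤ m) (he : Even m) : 6 ≤ (GP (6 * m) (3 * m - 1)).egirth := by
  rw [le_egirth]
  intro v w hw
  by_contra! hlt
  have h6 := (short_cycle_shape hm he hw.isCycleMap hw.three_le_length (by exact_mod_cast hlt.le)).1
  exact absurd hlt (by rw [h6]; exact lt_irrefl _)

lemma isCycleMap_hexagon (hm : 2 ≤ m) (a : ZMod (6 * m)) :
    IsCycleMap (GP (6 * m) (3 * m - 1)) (hexagon (3 * m - 1) a 1) := by
  have h1 : (1 : ZMod (6 * m)) ≠ 0 := by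
    exact_mod_cast ZMod.natCast_ne_zero_of_lt one_pos (by omega)
  have h2 : (2 : ZMod (6 * m)) ≠ 0 := by
    exact_mod_cast ZMod.natCast_ne_zero_of_lt two_pos (by omega)
  have hκ : κ ≠ 0 := by
    simpa using intCast_add_mul_kappa_ne_zero (m := m) (a := 0) (b := 1) (by simp; omega) (by simp)
  have hκ2 := two_add_kappa_ne_zero (m := m) (by omega)
  have hk := two_add_two_mul_kappa (m := m) (by omega)
  constructor
  · intro x y hxy
    obtain rfl | rfl | rfl | rfl | rfl | rfl := ZMod.six_cases x <;>
    obtain rfl | rfl | rfl | rfl | rfl | rfl := ZMod.six_cases y <;>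
    simp [hexagon] at hxy ⊢ <;> grind
  · rw [forall_adj_six]
    simp [GP, hexagon]
    grind

lemma is6CycleEdgeSet_iff_exists_hexagon (hm : 2 ≤ m) (he : Even m)
    {s : Finset (Sym2 (ZMod (6 * m) ⊕ ZMod (6 * m)))} :
    Is6CycleEdgeSet (GP (6 * m) (3 * m - 1)) s ↔ ∃ a, s = edgeImage (hexagon (3 * m - 1) a 1) := by
  have hk := two_add_two_mul_kappa (m := m) (by omega)
  rw [is6CycleEdgeSet_iff]
  constructor
  · rintro ⟨C, hC, rfl⟩
    obtain ⟨-, t, a, ε, hε, hshape⟩ := short_cycle_shape hm he hC (by norm_num) le_rfl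
    rw [eq_hexagon_comp_sub hk hshape, edgeImage_comp_sub_right]
    rcases hε with rfl | rfl
    · exact ⟨a, rfl⟩
    · exact ⟨a - 2, by rw [hexagon_neg_one hk, edgeImage_comp_sub_left]⟩
  · rintro ⟨a, rfl⟩
    exact ⟨_, isCycleMap_hexagon hm a, rfl⟩

lemma mem_edgeImage_hexagon {e : Sym2 (ZMod (6 * m) ⊕ ZMod (6 * m))} {a : ZMod (6 * m)} :
    e ∈ edgeImage (hexagon (3 * m - 1) a 1) ↔
      s(.inl a, .inl (a + 1)) = e ∨ s(.inl (a + 1), .inl (a + 2)) = e ∨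
      s(.inl (a + 2), .inr (a + 2)) = e ∨ s(.inr (a + 2), .inr (a + 2 + κ)) = e ∨
      s(.inr (a + 2 + κ), .inr a) = e ∨ s(.inr a, .inl a) = e := by
  rw [mem_edgeImage_six]
  simp [hexagon]

lemma outer_mem_edgeImage_hexagon_iff (hm : 2 ≤ m) {a i : ZMod (6 * m)} :
    s(.inl a, .inl (a + 1)) ∈ edgeImage (hexagon (3 * m - 1) i 1) ↔ i = a ∨ i = a - 1 := by
  have h2 : (2 : ZMod (6 * m)) ≠ 0 := by
    exact_mod_cast ZMod.natCast_ne_zero_of_lt two_pos (by omega)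
  rw [mem_edgeImage_hexagon]
  simp
  grind

lemma spoke_mem_edgeImage_hexagon_iff {a i : ZMod (6 * m)} :
    s(.inl a, .inr a) ∈ edgeImage (hexagon (3 * m - 1) i 1) ↔ i = a ∨ i = a - 2 := by
  rw [mem_edgeImage_hexagon]
  simp
  grind

lemma inner_mem_edgeImage_hexagon_iff (hm : 2 ≤ m) {a i : ZMod (6 * m)} :
    s(.inr a, .inr (a + κ)) ∈ edgeImage (hexagon (3 * m - 1) i 1) ↔ i = a - 2 ∨ i = a + κ := by
  have h2 : (2 : ZMod (6 * m)) ≠ 0 := by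
    exact_mod_cast ZMod.natCast_ne_zero_of_lt two_pos (by omega)
  have hk := two_add_two_mul_kappa (m := m) (by omega)
  rw [mem_edgeImage_hexagon]
  simp
  grind

lemma edgeImage_hexagon_injective (hm : 2 ≤ m) :
    Function.Injective fun a : ZMod (6 * m) => edgeImage (hexagon (3 * m - 1) a 1) := by
  intro a b hab
  simp only at hab
  have h1 : (1 : ZMod (6 * m)) ≠ 0 := by
    exact_mod_cast ZMod.natCast_ne_zero_of_lt one_pos (by omega)
  have hout : a = b ∨ a = b - 1 := (outer_mem_edgeImage_hexagon_iff hm).1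
    (by rw [hab]; exact (outer_mem_edgeImage_hexagon_iff hm).2 (Or.inl rfl))
  have hspoke : a = b ∨ a = b - 2 := spoke_mem_edgeImage_hexagon_iff.1
    (by rw [hab]; exact spoke_mem_edgeImage_hexagon_iff.2 (Or.inl rfl))
  rcases hout with h | h
  · exact h
  rcases hspoke with h' | h'
  · exact h'
  · exact absurd (by linear_combination h' - h) h1

lemma ncard_setOf_is6CycleEdgeSet_mem (hm : 2 ≤ m) (he : Even m)
    {e : Sym2 (ZMod (6 * m) ⊕ ZMod (6 * m))} {a b : ZMod (6 * m)} (hab : a ≠ b)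
    (hmem : ∀ i, e ∈ edgeImage (hexagon (3 * m - 1) i 1) ↔ i = a ∨ i = b) :
    {s | Is6CycleEdgeSet (GP (6 * m) (3 * m - 1)) s ∧ e ∈ s}.ncard = 2 := by
  have hset : {s | Is6CycleEdgeSet (GP (6 * m) (3 * m - 1)) s ∧ e ∈ s} =
      {edgeImage (hexagon (3 * m - 1) a 1), edgeImage (hexagon (3 * m - 1) b 1)} := by
    ext s
    simp only [Set.mem_ofPred_eq, is6CycleEdgeSet_iff_exists_hexagon hm he, Set.mem_insert_iff,
      Set.mem_singleton_iff]
    constructor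
    · rintro ⟨⟨i, rfl⟩, hi⟩
      rcases (hmem i).1 hi with rfl | rfl
      exacts [Or.inl rfl, Or.inr rfl]
    · rintro (rfl | rfl)
      exacts [⟨⟨a, rfl⟩, (hmem a).2 (Or.inl rfl)⟩, ⟨⟨b, rfl⟩, (hmem b).2 (Or.inr rfl)⟩]
  rw [hset, Set.ncard_pair ((edgeImage_hexagon_injective hm).ne hab)]

end GP

theorem GP_6m_signature_general (m : ℕ) (hm2 : 2 ≤ m) (hme : m % 2 = 0) :
    (GP (6 * m) (3 * m - 1)).girth = 6 ∧
    ∀ e ∈ (GP (6 * m) (3 * m - 1)).edgeSet,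
      {s : Finset (Sym2 (ZMod (6 * m) ⊕ ZMod (6 * m))) |
        Is6CycleEdgeSet (GP (6 * m) (3 * m - 1)) s ∧ e ∈ s}.ncard = 2 := by
  have he : Even m := Nat.even_iff.2 hme
  have hegirth : (GP (6 * m) (3 * m - 1)).egirth = 6 :=
    le_antisymm ((GP.isCycleMap_hexagon hm2 0).egirth_le (by norm_num)) (GP.six_le_egirth hm2 he)
  refine ⟨by rw [girth, hegirth]; rfl, fun e he' => ?_⟩
  have h1 : (1 : ZMod (6 * m)) ≠ 0 := by
    exact_mod_cast ZMod.natCast_ne_zero_of_lt one_pos (by omega)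
  have h2 : (2 : ZMod (6 * m)) ≠ 0 := by
    exact_mod_cast ZMod.natCast_ne_zero_of_lt two_pos (by omega)
  have hκ2 := two_add_kappa_ne_zero (m := m) (by omega)
  obtain ⟨a, rfl | rfl | rfl⟩ := GP.exists_eq_of_mem_edgeSet he'
  · refine GP.ncard_setOf_is6CycleEdgeSet_mem hm2 he (b := a - 1) ?_
      fun i => GP.outer_mem_edgeImage_hexagon_iff hm2
    exact fun h => h1 (by linear_combination h)
  · refine GP.ncard_setOf_is6CycleEdgeSet_mem hm2 he (b := a - 2) ?_
      fun i => GP.spoke_mem_edgeImage_hexagon_iff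
    exact fun h => h2 (by linear_combination h)
  · refine GP.ncard_setOf_is6CycleEdgeSet_mem hm2 he (a := a - 2) ?_
      fun i => GP.inner_mem_edgeImage_hexagon_iff hm2
    exact fun h => hκ2 (by linear_combination -h)

/-- For even `m ≥ 2`, every edge of `GP(6m, 3m-1)` lies in exactly two `6`-cycles;
in particular the graph is girth-regular with signature `(2,2,2)` and girth `6`. -/
theorem GP_6m_signature (m : ℕ) [NeZero (6 * m)] (hm2 : 2 ≤ m) (hme : m % 2 = 0) :
    (GP (6 * m) (3 * m - 1)).girth = 6 ∧
    ∀ e ∈ (GP (6 * m) (3 * m - 1)).edgeSet,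
      {s : Finset (Sym2 (ZMod (6 * m) ⊕ ZMod (6 * m))) |
        Is6CycleEdgeSet (GP (6 * m) (3 * m - 1)) s ∧ e ∈ s}.ncard = 2 :=
  GP_6m_signature_general m hm2 hme
end

section
/- The honeycomb toroidal graph HTG(1, n, ℓ) (with n ≥ 4 even, ℓ odd, 0 ≤ ℓ ≤ n/2) is a 3-RDR graph if and only if n ≡ 0 (mod 6) and ℓ ≡ 3 (mod 6). -/
open SimpleGraph Finset

/-- One-directional adjacency relation of the honeycomb toroidal graph
`HTG(m,n,ℓ)`: vertical edges, horizontal edges and jumps. -/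
def HTGRel (m n ℓ : ℕ) [NeZero m] [NeZero n]
    (x y : ZMod m × ZMod n) : Prop :=
  (y.1 = x.1 ∧ y.2 = x.2 + 1) ∨
  (x.1.val < m - 1 ∧ y.1 = x.1 + 1 ∧ y.2 = x.2 ∧ (x.1.val + 1) % 2 = x.2.val % 2) ∨
  (x.1.val = m - 1 ∧ y.1 = 0 ∧ y.2 = x.2 + (ℓ : ZMod n) ∧ x.2.val % 2 = m % 2)

/-- The honeycomb toroidal graph `HTG(m,n,ℓ)` on vertex set `ZMod m × ZMod n`. -/
def HTG (m n ℓ : ℕ) [NeZero m] [NeZero n] : SimpleGraph (ZMod m × ZMod n) where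
  Adj x y := x ≠ y ∧ (HTGRel m n ℓ x y ∨ HTGRel m n ℓ y x)
  symm := by constructor; rintro x y ⟨hne, h⟩; exact ⟨hne.symm, h.symm⟩
  loopless := by constructor; rintro x ⟨hne, -⟩; exact hne rfl

open scoped Classical in
/-- A graph is `3`-RDR if it is cubic and its `3`-rainbow domination number equals
half the number of vertices. -/
def Is3RDR {V : Type*} [Fintype V] (X : SimpleGraph V) : Prop :=
  X.IsRegularOfDegree 3 ∧ 2 * rainbowDomNum X 3 = Fintype.card V

/-!
In a cubic graph, a 3-rainbow dominating function of weight `w` has at most `w` nonempty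
vertices, and at most `w` empty ones: each empty vertex sees weight at least 3 on its
neighbours, while all neighbourhoods together carry weight `3 w`. Hence `γ_r3 ≥ N / 2`, with
equality only for singleton-valued functions whose nonempty vertices form an independent set of
size `N / 2`. In `HTG(1,n,ℓ)`, the cycle `ℤ_n` plus jumps, that set is a parity class, and every
vertex outside it sees three distinct colours on its two cycle neighbours and its jump
neighbour. Read in `ZMod 3`, the colours along the class then form an arithmetic progression with
nonzero step; going once around the cycle gives `3 ∣ n / 2`, and following a jump gives
`3 ∣ ℓ`. Conversely, for `6 ∣ n` and `ℓ ≡ 3 (mod 6)`, colouring the residues `1, 3, 5` mod 6 by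
`0, 1, 2` is a 3-rainbow dominating function of weight `n / 2`.
-/

section RainbowCounting

variable {V : Type*} {G : SimpleGraph V} {k : ℕ} {f : V → Finset (Fin k)}

theorem IsKRDF.univ_subset_biUnion_neighborFinset [G.LocallyFinite]
    (hf : IsKRDF G k f) {v : V} (hv : f v = ∅) : univ ⊆ (G.neighborFinset v).biUnion f :=
  fun c _ => by
    obtain ⟨u, hadj, hc⟩ := hf v hv c
    exact mem_biUnion.2 ⟨u, (G.mem_neighborFinset v u).2 hadj, hc⟩

theorem IsKRDF.le_sum_neighborFinset [G.LocallyFinite] (hf : IsKRDF G k f) {v : V}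
    (hv : f v = ∅) : k ≤ ∑ u ∈ G.neighborFinset v, #(f u) :=
  calc k = #(univ : Finset (Fin k)) := by simp
    _ ≤ _ := card_le_card (hf.univ_subset_biUnion_neighborFinset hv)
    _ ≤ _ := card_biUnion_le

theorem ite_ne_empty_le_card {α : Type*} [DecidableEq α] (s : Finset α) :
    (if s ≠ ∅ then 1 else 0) ≤ #s := by
  split_ifs with hs
  · exact card_pos.2 (nonempty_iff_ne_empty.2 hs)
  · exact Nat.zero_le _

variable [Fintype V]

theorem card_support_le_rdfWeight (f : V → Finset (Fin k)) :
    #{v | f v ≠ ∅} ≤ rdfWeight f := by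
  rw [card_filter, rdfWeight]
  exact sum_le_sum fun v _ => ite_ne_empty_le_card (f v)

theorem sum_sum_neighborFinset_eq [G.LocallyFinite] {d : ℕ} (hreg : G.IsRegularOfDegree d)
    (g : V → ℕ) : ∑ v, ∑ u ∈ G.neighborFinset v, g u = d * ∑ v, g v := by
  rw [Finset.sum_comm' (t' := univ) (s' := fun u => G.neighborFinset u) (by simp [adj_comm]),
    mul_sum]
  simp only [sum_const, card_neighborFinset_eq_degree, hreg _, smul_eq_mul]

variable [G.LocallyFinite] (hreg : G.IsRegularOfDegree k) (hf : IsKRDF G k f)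
include hreg hf

/-- Each empty vertex sees weight at least `k` around it, while all vertices together see
weight exactly `k * rdfWeight f`. -/
theorem IsKRDF.mul_card_empty_add_le :
    k * #{v | f v = ∅} + ∑ v with f v ≠ ∅, ∑ u ∈ G.neighborFinset v, #(f u)
      ≤ k * rdfWeight f := by
  have hempty : k * #{v | f v = ∅} ≤ ∑ v with f v = ∅, ∑ u ∈ G.neighborFinset v, #(f u) := by
    rw [mul_comm, ← smul_eq_mul, ← sum_const]
    exact sum_le_sum fun v hv => hf.le_sum_neighborFinset (mem_filter.1 hv).2
  have htotal := sum_sum_neighborFinset_eq hreg fun u => #(f u)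
  rw [← sum_filter_add_sum_filter_not univ (fun v => f v = ∅)] at htotal
  simp only [← ne_eq] at htotal
  rw [rdfWeight]
  omega

variable (hk : 0 < k)
include hk

theorem IsKRDF.card_le_two_mul_rdfWeight_s14 : Fintype.card V ≤ 2 * rdfWeight f := by
  have hsplit := card_filter_add_card_filter_not (s := univ) (fun v => f v = ∅)
  simp only [← ne_eq, card_univ] at hsplit
  have hempty : #{v | f v = ∅} ≤ rdfWeight f :=
    Nat.le_of_mul_le_mul_left (le_of_add_le_left (hf.mul_card_empty_add_le hreg)) hk
  have := card_support_le_rdfWeight f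
  omega

variable (hw : 2 * rdfWeight f = Fintype.card V)
include hw

theorem IsKRDF.card_support_eq_and_sum_support_eq_zero :
    #{v | f v ≠ ∅} = rdfWeight f ∧
      ∑ v with f v ≠ ∅, ∑ u ∈ G.neighborFinset v, #(f u) = 0 := by
  have hsplit := card_filter_add_card_filter_not (s := univ) (fun v => f v = ∅)
  simp only [← ne_eq, card_univ] at hsplit
  have hle := hf.mul_card_empty_add_le hreg
  have := card_support_le_rdfWeight f
  have hempty : #{v | f v = ∅} = rdfWeight f := by
    have := Nat.le_of_mul_le_mul_left (le_of_add_le_left hle) hk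
    omega
  rw [hempty] at hle
  omega

theorem IsKRDF.card_le_one_of_two_mul_rdfWeight_eq (v : V) : #(f v) ≤ 1 := by
  have hS := (hf.card_support_eq_and_sum_support_eq_zero hreg hk hw).1
  rw [card_filter, rdfWeight, sum_eq_sum_iff_of_le fun w _ => ite_ne_empty_le_card (f w)] at hS
  rw [← hS v (mem_univ v)]
  split_ifs <;> omega

theorem IsKRDF.eq_empty_of_adj_of_two_mul_rdfWeight_eq {v u : V} (hv : f v ≠ ∅)
    (hadj : G.Adj v u) : f u = ∅ := by
  have hN := (hf.card_support_eq_and_sum_support_eq_zero hreg hk hw).2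
  rw [sum_eq_zero_iff] at hN
  have := sum_eq_zero_iff.1 (hN v (mem_filter.2 ⟨mem_univ v, hv⟩)) u
    ((G.mem_neighborFinset v u).2 hadj)
  exact card_eq_zero.1 this

theorem IsKRDF.two_mul_card_support_of_two_mul_rdfWeight_eq :
    2 * #{v | f v ≠ ∅} = Fintype.card V := by
  rw [(hf.card_support_eq_and_sum_support_eq_zero hreg hk hw).1, hw]

end RainbowCounting

theorem two_mul_rainbowDomNum_eq_card_iff {V : Type*} [Fintype V] {G : SimpleGraph V}
    [G.LocallyFinite] {k : ℕ} (hreg : G.IsRegularOfDegree k) (hk : 0 < k) :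
    2 * rainbowDomNum G k = Fintype.card V ↔
      ∃ f, IsKRDF G k f ∧ 2 * rdfWeight f = Fintype.card V := by
  have hconst : IsKRDF G k fun _ => univ := fun _ hv =>
    ((univ_eq_empty_iff.1 hv).false ⟨0, hk⟩).elim
  have hne : {w | ∃ f, IsKRDF G k f ∧ rdfWeight f = w}.Nonempty := ⟨_, _, hconst, rfl⟩
  constructor
  · intro h
    obtain ⟨f, hf, hwf⟩ := Nat.sInf_mem hne
    exact ⟨f, hf, by rw [rainbowDomNum] at h; rw [hwf, h]⟩
  · rintro ⟨f, hf, hw⟩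
    obtain ⟨g, hg, hwg⟩ := Nat.sInf_mem hne
    have hle : rainbowDomNum G k ≤ rdfWeight f := Nat.sInf_le ⟨f, hf, rfl⟩
    have := hg.card_le_two_mul_rdfWeight_s14 hreg hk
    rw [hwg] at this
    rw [rainbowDomNum] at hle ⊢
    omega

theorem iff_not_apply_of_two_mul_card_eq {α : Type*} [Fintype α] (σ : Equiv.Perm α)
    {p : α → Prop} [DecidablePred p] (hσ : ∀ x, p x → ¬ p (σ x))
    (hcard : 2 * #{x | p x} = Fintype.card α) (x : α) : p x ↔ ¬ p (σ x) := by
  classical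
  set S : Finset α := {x | p x}
  have hmap : S.map σ.toEmbedding = Sᶜ := by
    refine eq_of_subset_of_card_le (fun y hy => ?_) ?_
    · obtain ⟨z, hz, rfl⟩ := mem_map.1 hy
      simpa [S] using hσ z (by simpa [S] using hz)
    · rw [card_map, card_compl]
      omega
  refine ⟨hσ x, fun hx => ?_⟩
  have : σ x ∈ S.map σ.toEmbedding := by rw [hmap]; simpa [S] using hx
  simpa [S] using this

theorem Fin.eq_pairwise_ne_singletons_of_univ_subset {A B C : Finset (Fin 3)} (hA : #A ≤ 1)
    (hB : #B ≤ 1) (hC : #C ≤ 1) (h : univ ⊆ A ∪ (B ∪ C)) :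
    ∃ a b c, A = {a} ∧ B = {b} ∧ C = {c} ∧ a ≠ b ∧ a ≠ c ∧ b ≠ c := by
  have hcard : 3 ≤ #A + #B + #C :=
    calc 3 = #(univ : Finset (Fin 3)) := rfl
      _ ≤ #(A ∪ (B ∪ C)) := card_le_card h
      _ ≤ #A + #(B ∪ C) := card_union_le _ _
      _ ≤ #A + #B + #C := by grw [card_union_le]; omega
  obtain ⟨a, rfl⟩ := card_eq_one.1 (by omega : #A = 1)
  obtain ⟨b, rfl⟩ := card_eq_one.1 (by omega : #B = 1)
  obtain ⟨c, rfl⟩ := card_eq_one.1 (by omega : #C = 1)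
  have key : ∀ a b c : Fin 3, univ ⊆ {a} ∪ ({b} ∪ {c}) → a ≠ b ∧ a ≠ c ∧ b ≠ c := by decide
  exact ⟨a, b, c, rfl, rfl, rfl, key a b c h⟩

theorem eq_add_zsmul_of_sub_eq {G : Type*} [AddCommGroup G] (a : ℤ → G) (d : G)
    (h : ∀ k, a (k + 1) - a k = d) (k : ℤ) : a k = a 0 + k • d := by
  induction k using Int.induction_on with
  | zero => simp
  | succ i ih => rw [add_zsmul, one_zsmul, ← add_assoc, ← ih, ← h i]; abel
  | pred i ih =>
    have hprev : a (-i - 1) = a (-i) - d := by rw [← h (-i - 1), sub_add_cancel]; abel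
    rw [hprev, ih, sub_zsmul, one_zsmul]; abel

/-- Three distinct elements of `ZMod 3` sum to `0` and form an arithmetic progression, so `a` is
one with nonzero step `d`; then `a p = a 0` gives `p * d = 0` and `a m = -(a 0 + a 1)` gives
`(m + 1) * d = 0`. -/
theorem ZMod.three_dvd_of_pairwise_ne (a : ℤ → ZMod 3) (m p : ℤ) (hp : a p = a 0)
    (h : ∀ k, a k ≠ a (k + 1) ∧ a k ≠ a (k + m) ∧ a (k + 1) ≠ a (k + m)) :
    3 ∣ p ∧ 3 ∣ m + 1 := by
  have sum_eq : ∀ x y z : ZMod 3, x ≠ y → x ≠ z → y ≠ z → x + y + z = 0 := by decide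
  have sub_eq : ∀ x y z : ZMod 3, x ≠ y → x ≠ z → y ≠ z → z - y = y - x := by decide
  have three : (3 : ZMod 3) = 0 := rfl
  have hthird (k : ℤ) : a (k + m) = -(a k + a (k + 1)) := by
    obtain ⟨h₁, h₂, h₃⟩ := h k
    linear_combination sum_eq _ _ _ h₁ h₂ h₃
  have hne₂ (k : ℤ) : a k ≠ a (k + 1 + 1) := fun hk => (h (k + m)).1 (by
    rw [hthird, add_right_comm, hthird, ← hk]; ring)
  have hsecond (k : ℤ) : (a (k + 1 + 1) - a (k + 1)) - (a (k + 1) - a k) = 0 :=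
    sub_eq_zero.2 (sub_eq _ _ _ (h k).1 (hne₂ k) (h (k + 1)).1)
  set d := a 1 - a 0
  have hstep (k : ℤ) : a (k + 1) - a k = d := by
    simpa using eq_add_zsmul_of_sub_eq (fun k => a (k + 1) - a k) 0 hsecond k
  have haff (k : ℤ) : a k = a 0 + k * d := by
    simpa using eq_add_zsmul_of_sub_eq a d hstep k
  have hd : d ≠ 0 := sub_ne_zero.2 (by simpa using (h 0).1.symm)
  constructor
  · have : (p : ZMod 3) * d = 0 := by linear_combination hp - haff p
    exact (ZMod.intCast_zmod_eq_zero_iff_dvd p 3).1 ((mul_eq_zero.1 this).resolve_right hd)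
  · have hm := hthird 0
    rw [zero_add, zero_add, haff m, haff 1] at hm
    have : ((m + 1 : ℤ) : ZMod 3) * d = 0 := by
      push_cast
      linear_combination hm - a 0 * three
    exact (ZMod.intCast_zmod_eq_zero_iff_dvd _ 3).1 ((mul_eq_zero.1 this).resolve_right hd)

/-- The colour `i` of a singleton `{i}`, read in `ZMod 3` so that colours can be added. -/
def colorValue (s : Finset (Fin 3)) : ZMod 3 := ∑ i ∈ s, ZMod.finEquiv 3 i

theorem IsKRDF.colorValue_pairwise_ne {V : Type*} {G : SimpleGraph V} [G.LocallyFinite]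
    [DecidableEq V] {f : V → Finset (Fin 3)} (hf : IsKRDF G 3 f) (hle : ∀ v, #(f v) ≤ 1)
    {v x y z : V} (hv : f v = ∅) (hN : G.neighborFinset v = {x, y, z}) :
    colorValue (f x) ≠ colorValue (f y) ∧ colorValue (f x) ≠ colorValue (f z) ∧
      colorValue (f y) ≠ colorValue (f z) := by
  have hcover := hf.univ_subset_biUnion_neighborFinset hv
  rw [hN, biUnion_insert, biUnion_insert, singleton_biUnion] at hcover
  obtain ⟨a, b, c, ha, hb, hc, hab, hac, hbc⟩ :=
    Fin.eq_pairwise_ne_singletons_of_univ_subset (hle x) (hle y) (hle z) hcover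
  simp only [colorValue, ha, hb, hc, sum_singleton, ne_eq, EmbeddingLike.apply_eq_iff_eq]
  exact ⟨hab, hac, hbc⟩

section HTG1

variable {n ℓ : ℕ}

def htgJump (ℓ : ℕ) (x : ZMod n) : ZMod n := if x.val % 2 = 1 then x + ℓ else x - ℓ

theorem htgJump_eq (x : ZMod n) : htgJump ℓ x = x + ℓ ∨ htgJump ℓ x = x - ℓ := by
  unfold htgJump; split_ifs <;> simp

theorem exists_htgJump_add_one_eq (hℓ : ℓ % 2 = 1) (x : ZMod n) :
    ∃ m : ℤ, htgJump ℓ (x + 1) = x + (m : ZMod n) * 2 ∧ (m * 2 = 1 + ℓ ∨ m * 2 = 1 - ℓ) := by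
  obtain ⟨e, he, hJ⟩ : ∃ e : ℤ, (e = ℓ ∨ e = -ℓ) ∧ htgJump ℓ (x + 1) = x + 1 + (e : ZMod n) := by
    rcases htgJump_eq (ℓ := ℓ) (x + 1) with h | h
    · exact ⟨ℓ, Or.inl rfl, by rw [h]; push_cast; ring⟩
    · exact ⟨-ℓ, Or.inr rfl, by rw [h]; push_cast; ring⟩
  have hm : (1 + e) / 2 * 2 = 1 + e := by omega
  refine ⟨(1 + e) / 2, ?_, by omega⟩
  have := congrArg (Int.cast : ℤ → ZMod n) hm
  push_cast at this
  rw [hJ]; linear_combination -this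

variable [NeZero n]

theorem HTGRel_one_iff (x y : ZMod 1 × ZMod n) :
    HTGRel 1 n ℓ x y ↔ y.2 = x.2 + 1 ∨ (x.2.val % 2 = 1 ∧ y.2 = x.2 + ℓ) := by
  have hx : x.1.val = 0 := Nat.lt_one_iff.1 (ZMod.val_lt x.1)
  unfold HTGRel
  constructor
  · rintro (⟨-, h⟩ | ⟨h, -⟩ | ⟨-, -, h, hp⟩)
    · exact Or.inl h
    · omega
    · exact Or.inr ⟨by omega, h⟩
  · rintro (h | ⟨hp, h⟩)
    · exact Or.inl ⟨Subsingleton.elim _ _, h⟩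
    · exact Or.inr (Or.inr ⟨by omega, Subsingleton.elim _ _, h, by omega⟩)

variable (h2 : 2 ∣ n)
include h2

theorem val_add_natCast_mod_two (x : ZMod n) (a : ℕ) : (x + a).val % 2 = (x.val + a) % 2 := by
  rw [ZMod.val_add, Nat.mod_mod_of_dvd _ h2, ZMod.val_natCast, Nat.add_mod,
    Nat.mod_mod_of_dvd _ h2, ← Nat.add_mod]

theorem htgJump_sub_periodic : Function.Periodic (fun x : ZMod n => htgJump ℓ x - x) 2 := by
  intro x
  have hpar : (x + 2).val % 2 = x.val % 2 := by
    rw [← Nat.cast_ofNat, val_add_natCast_mod_two h2]; omega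
  simp only [htgJump, hpar]
  split_ifs <;> ring

variable (hℓ : ℓ % 2 = 1)
include hℓ

theorem val_htgJump_mod_two_ne (x : ZMod n) : (htgJump ℓ x).val % 2 ≠ x.val % 2 := by
  have hfwd := val_add_natCast_mod_two h2 x ℓ
  have hbwd := val_add_natCast_mod_two h2 (x - ℓ) ℓ
  rw [sub_add_cancel] at hbwd
  unfold htgJump
  split_ifs <;> omega

theorem HTG1_adj_iff {a b : ZMod 1} {x y : ZMod n} :
    (HTG 1 n ℓ).Adj (a, x) (b, y) ↔ y = x - 1 ∨ y = x + 1 ∨ y = htgJump ℓ x := by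
  have hsucc (z : ZMod n) : (z + 1).val % 2 ≠ z.val % 2 := by
    rw [← Nat.cast_one, val_add_natCast_mod_two h2]; omega
  have hjump : (x.val % 2 = 1 ∧ y = x + ℓ) ∨ (y.val % 2 = 1 ∧ x = y + ℓ) ↔ y = htgJump ℓ x := by
    have := val_add_natCast_mod_two h2 y ℓ
    unfold htgJump
    split_ifs with hx
    · exact ⟨by rintro (⟨-, h⟩ | ⟨hy, rfl⟩) <;> [exact h; omega], fun h => Or.inl ⟨hx, h⟩⟩
    · rw [eq_sub_iff_add_eq]
      exact ⟨by rintro (⟨h, -⟩ | ⟨-, h⟩) <;> [exact absurd h hx; exact h.symm],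
        by rintro rfl; exact Or.inr ⟨by omega, rfl⟩⟩
  have hne : y = x - 1 ∨ y = x + 1 ∨ y = htgJump ℓ x → x ≠ y := by
    rintro (rfl | rfl | rfl) h
    · exact hsucc (x - 1) (by rw [sub_add_cancel, ← h])
    · exact hsucc x (by rw [← h])
    · exact val_htgJump_mod_two_ne h2 hℓ x (by rw [← h])
  change (a, x) ≠ (b, y) ∧ (HTGRel 1 n ℓ _ _ ∨ HTGRel 1 n ℓ _ _) ↔ _
  rw [HTGRel_one_iff, HTGRel_one_iff, ← hjump, eq_sub_iff_add_eq]
  constructor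
  · rintro ⟨-, (h | h) | (h | h)⟩ <;> tauto
  · intro h
    refine ⟨fun heq => hne ?_ (congrArg Prod.snd heq), by tauto⟩
    rwa [← eq_sub_iff_add_eq, hjump] at h

theorem HTG1_neighborFinset (a : ZMod 1) (x : ZMod n)
    [Fintype ((HTG 1 n ℓ).neighborSet (a, x))] :
    (HTG 1 n ℓ).neighborFinset (a, x) = {(0, x - 1), (0, x + 1), (0, htgJump ℓ x)} := by
  ext ⟨b, y⟩
  simp [HTG1_adj_iff h2 hℓ, Subsingleton.elim b 0]

theorem HTG1_isRegularOfDegree [(HTG 1 n ℓ).LocallyFinite] (hℓ1 : 1 < ℓ) (hℓn : ℓ + 1 < n) :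
    (HTG 1 n ℓ).IsRegularOfDegree 3 := by
  have hne {a : ℕ} (ha : 0 < a) (han : a < n) : (a : ZMod n) ≠ 0 :=
    (ZMod.natCast_eq_zero_iff a n).not.2 (Nat.not_dvd_of_pos_of_lt ha han)
  have htwo : (2 : ZMod n) ≠ 0 := by exact_mod_cast hne (a := 2) (by omega) (by omega)
  have hsub : (ℓ : ZMod n) - 1 ≠ 0 := by
    simpa [Nat.cast_sub hℓ1.le] using hne (a := ℓ - 1) (by omega) (by omega)
  have hadd : (ℓ : ZMod n) + 1 ≠ 0 := by exact_mod_cast hne (a := ℓ + 1) (by omega) hℓn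
  rintro ⟨a, x⟩
  rw [← card_neighborFinset_eq_degree, HTG1_neighborFinset h2 hℓ]
  rcases htgJump_eq (ℓ := ℓ) x with h | h <;> rw [h] <;>
    refine card_eq_three.2 ⟨_, _, _, ?_, ?_, ?_, rfl⟩ <;>
    simp only [ne_eq, Prod.mk.injEq, true_and] <;> intro h' <;>
    first
    | exact htwo (by linear_combination -h')
    | exact hsub (by linear_combination h') | exact hsub (by linear_combination -h')
    | exact hadd (by linear_combination h') | exact hadd (by linear_combination -h')

theorem HTG1_ne_empty_iff_add_one_eq_empty [(HTG 1 n ℓ).LocallyFinite]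
    (hreg : (HTG 1 n ℓ).IsRegularOfDegree 3) {f : ZMod 1 × ZMod n → Finset (Fin 3)}
    (hf : IsKRDF (HTG 1 n ℓ) 3 f) (hw : 2 * rdfWeight f = Fintype.card (ZMod 1 × ZMod n))
    (x : ZMod n) : f (0, x) ≠ ∅ ↔ f (0, x + 1) = ∅ := by
  have hσ (v : ZMod 1 × ZMod n) (hv : f v ≠ ∅) : ¬ f (v + (0, 1)) ≠ ∅ :=
    not_not.2 (hf.eq_empty_of_adj_of_two_mul_rdfWeight_eq hreg three_pos hw hv
      ((HTG1_adj_iff h2 hℓ).2 (Or.inr (Or.inl rfl))))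
  simpa using iff_not_apply_of_two_mul_card_eq (Equiv.addRight (0, 1)) hσ
    (hf.two_mul_card_support_of_two_mul_rdfWeight_eq hreg three_pos hw) (0, x)

theorem HTG1_colorValue_pairwise_ne [(HTG 1 n ℓ).LocallyFinite]
    {f : ZMod 1 × ZMod n → Finset (Fin 3)} (hf : IsKRDF (HTG 1 n ℓ) 3 f)
    (hle : ∀ v, #(f v) ≤ 1) {b : ZMod n} {m : ℤ} (hm : htgJump ℓ (b + 1) = b + (m : ZMod n) * 2)
    {k : ℤ} (hempty : f (0, b + (k : ZMod n) * 2 + 1) = ∅) :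
    let a : ℤ → ZMod 3 := fun k => colorValue (f (0, b + (k : ZMod n) * 2))
    a k ≠ a (k + 1) ∧ a k ≠ a (k + m) ∧ a (k + 1) ≠ a (k + m) := by
  refine hf.colorValue_pairwise_ne hle hempty ?_
  have hjump := (htgJump_sub_periodic h2 (ℓ := ℓ)).int_mul k (b + 1)
  simp only [hm] at hjump
  have hJ : htgJump ℓ (b + (k : ZMod n) * 2 + 1) = b + ((k + m : ℤ) : ZMod n) * 2 := by
    rw [add_right_comm]; push_cast; linear_combination hjump
  rw [HTG1_neighborFinset h2 hℓ, hJ]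
  push_cast
  ring_nf

theorem HTG1_mod_six_of_two_mul_rdfWeight_eq [(HTG 1 n ℓ).LocallyFinite]
    (hreg : (HTG 1 n ℓ).IsRegularOfDegree 3) {f : ZMod 1 × ZMod n → Finset (Fin 3)}
    (hf : IsKRDF (HTG 1 n ℓ) 3 f) (hw : 2 * rdfWeight f = Fintype.card (ZMod 1 × ZMod n)) :
    n % 6 = 0 ∧ ℓ % 6 = 3 := by
  have hcardV : Fintype.card (ZMod 1 × ZMod n) = n := by simp
  have hle := hf.card_le_one_of_two_mul_rdfWeight_eq hreg three_pos hw
  have hsupp := hf.two_mul_card_support_of_two_mul_rdfWeight_eq hreg three_pos hw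
  have halt := HTG1_ne_empty_iff_add_one_eq_empty h2 hℓ hreg hf hw
  have hperiodic : Function.Periodic (fun x => f (0, x) ≠ ∅) 2 := fun x => by
    have := halt x
    have := halt (x + 1)
    rw [← one_add_one_eq_two, ← add_assoc]
    exact propext (by tauto)
  obtain ⟨b, hb⟩ : ∃ b, f (0, b) ≠ ∅ := by
    obtain ⟨⟨a, b⟩, hab⟩ : ({v | f v ≠ ∅} : Finset _).Nonempty := by
      rw [← card_pos]; have := NeZero.pos n; omega
    exact ⟨b, by simpa [Subsingleton.elim a 0] using hab⟩
  obtain ⟨m, hm, hmℓ⟩ := exists_htgJump_add_one_eq hℓ b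
  set a : ℤ → ZMod 3 := fun k => colorValue (f (0, b + k * 2))
  have hcolors (k : ℤ) : a k ≠ a (k + 1) ∧ a k ≠ a (k + m) ∧ a (k + 1) ≠ a (k + m) :=
    HTG1_colorValue_pairwise_ne h2 hℓ hf hle hm ((halt _).1 (hperiodic.int_mul k b ▸ hb))
  have hperiod : a (n / 2) = a 0 := by
    have hn : (n / 2 : ℤ) * 2 = n := by omega
    have : ((n / 2 : ℤ) : ZMod n) * 2 = 0 := by
      have := congrArg (Int.cast : ℤ → ZMod n) hn
      push_cast at this
      rw [this, ZMod.natCast_self]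
    simp [a, this]
  obtain ⟨hn, hm3⟩ := ZMod.three_dvd_of_pairwise_ne a m _ hperiod hcolors
  omega

end HTG1

def sixPattern (e : ZMod 6) : Finset (Fin 3) :=
  if e = 1 then {0} else if e = 3 then {1} else if e = 5 then {2} else ∅

theorem sixPattern_card_add_card_add_one :
    ∀ e : ZMod 6, #(sixPattern e) + #(sixPattern (e + 1)) = 1 := by decide

theorem sixPattern_cover_of_eq_empty :
    ∀ e : ZMod 6, sixPattern e = ∅ → e.val % 2 = 0 ∧
      ∀ c, c ∈ sixPattern (e - 1) ∨ c ∈ sixPattern (e + 1) ∨ c ∈ sixPattern (e - 3) := by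
  decide

theorem two_mul_sum_eq_card_of_add_eq_one {α : Type*} [Fintype α] [AddGroup α] (g : α → ℕ)
    (t : α) (h : ∀ x, g x + g (x + t) = 1) : 2 * ∑ x, g x = Fintype.card α := by
  have hshift : ∑ x, g (x + t) = ∑ x, g x := Equiv.sum_comp (Equiv.addRight t) g
  calc 2 * ∑ x, g x = ∑ x, (g x + g (x + t)) := by rw [sum_add_distrib, hshift, two_mul]
    _ = Fintype.card α := by simp [h]

theorem HTG1_exists_isKRDF_of_mod_six {n ℓ : ℕ} [NeZero n] (h6 : 6 ∣ n) (hℓ : ℓ % 6 = 3) :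
    ∃ f, IsKRDF (HTG 1 n ℓ) 3 f ∧ 2 * rdfWeight f = Fintype.card (ZMod 1 × ZMod n) := by
  have h2 : 2 ∣ n := (Nat.dvd_of_mod_eq_zero rfl).trans h6
  set φ := ZMod.castHom h6 (ZMod 6)
  have hφval (x : ZMod n) : (φ x).val % 2 = x.val % 2 := by
    rw [ZMod.castHom_apply, ZMod.cast_eq_val, ZMod.val_natCast, Nat.mod_mod_of_dvd _ (by norm_num)]
  have hφℓ : φ ℓ = 3 := by rw [map_natCast, ← ZMod.natCast_mod, hℓ]; rfl
  refine ⟨fun v => sixPattern (φ v.2), ?_, ?_⟩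
  · rintro ⟨a, x⟩ hx c
    obtain ⟨heven, hcover⟩ := sixPattern_cover_of_eq_empty (φ x) hx
    have hJ : htgJump ℓ x = x - ℓ := if_neg (by rw [← hφval]; omega)
    have hadj {y : ZMod n} (hy : y = x - 1 ∨ y = x + 1 ∨ y = htgJump ℓ x) :
        (HTG 1 n ℓ).Adj (a, x) (0, y) := (HTG1_adj_iff h2 (by omega)).2 hy
    rcases hcover c with hc | hc | hc
    · exact ⟨(0, x - 1), hadj (Or.inl rfl), by simpa using hc⟩
    · exact ⟨(0, x + 1), hadj (Or.inr (Or.inl rfl)), by simpa using hc⟩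
    · exact ⟨(0, x - ℓ), hadj (Or.inr (Or.inr hJ.symm)), by simpa [hφℓ] using hc⟩
  · exact two_mul_sum_eq_card_of_add_eq_one _ (0, 1)
      fun v => by simpa using sixPattern_card_add_card_add_one (φ v.2)

theorem HTG1_is3RDR_iff_general (n ℓ : ℕ) [NeZero n] (hne : n % 2 = 0)
    (hlo : ℓ % 2 = 1) (hl2 : 2 * ℓ ≤ n) :
    Is3RDR (HTG 1 n ℓ) ↔ (n % 6 = 0 ∧ ℓ % 6 = 3) := by
  classical
  have h2 : 2 ∣ n := Nat.dvd_of_mod_eq_zero hne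
  constructor
  · rintro ⟨hreg, hγ⟩
    obtain ⟨f, hf, hw⟩ := (two_mul_rainbowDomNum_eq_card_iff hreg three_pos).1 hγ
    exact HTG1_mod_six_of_two_mul_rdfWeight_eq h2 hlo hreg hf hw
  · rintro ⟨hn6, hl6⟩
    have hreg := HTG1_isRegularOfDegree h2 hlo (by omega) (by omega)
    exact ⟨hreg, (two_mul_rainbowDomNum_eq_card_iff hreg three_pos).2
      (HTG1_exists_isKRDF_of_mod_six (Nat.dvd_of_mod_eq_zero hn6) hl6)⟩

/-- `HTG(1,n,ℓ)` (with `n ≥ 4` even, `ℓ` odd, `0 ≤ ℓ ≤ n/2`) is `3`-RDR iff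
`n ≡ 0 (mod 6)` and `ℓ ≡ 3 (mod 6)`. -/
theorem HTG1_is3RDR_iff (n ℓ : ℕ) [NeZero n] (hn4 : 4 ≤ n) (hne : n % 2 = 0)
    (hlo : ℓ % 2 = 1) (hl2 : 2 * ℓ ≤ n) :
    Is3RDR (HTG 1 n ℓ) ↔ (n % 6 = 0 ∧ ℓ % 6 = 3) :=
  HTG1_is3RDR_iff_general n ℓ hne hlo hl2
end
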